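/- arXiv:1107.3308 — 3 statements merged into one kernel-verified Lean document; each statement's English description precedes it below -/
import Mathlib

section
/- Let X be a geodesic metric space equipped with a family of paths such that every ordered pair of points is joined by a path in the family, each path in the family is a (λ, λ)-quasi-geodesic, and every triangle formed by three paths of the family is δ-thin (each side is in the δ-neighborhood of the union of the other two). Then X is hyperbolic: there is δ' depending only on λ and δ such that every geodesic triangle in X is δ'-thin. -/
open Set Metric

private lemma two_mul_add_one_le_pow (j : ℕ) : (2*j+1 : ℝ) ≤ 4 * 2^j := by
  induction j with
  | zero => norm_num
  | succ m ih =>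
    have h1 : (1:ℝ) ≤ 2^m := one_le_pow₀ (by norm_num)
    push_cast [pow_succ] at *
    nlinarith

private lemma sq_le_four_two_pow (j : ℕ) : (j:ℝ)^2 ≤ 4 * 2^j := by
  induction j with
  | zero => norm_num
  | succ m ih =>
    have h2 := two_mul_add_one_le_pow m
    push_cast [pow_succ] at *
    nlinarith

/-- abstract family of coarse paths -/
structure Fam (lam δ : ℝ) (X : Type) [MetricSpace X] (L : X → X → Set X) : Prop where
  hlam : 1 ≤ lam
  hδ : 0 ≤ δ
  symm : ∀ a b, L a b = L b a
  mem_left : ∀ a b, a ∈ L a b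
  thin : ∀ a b c, ∀ x ∈ L a b, ∃ y ∈ L a c ∪ L c b, dist x y ≤ δ
  size : ∀ a b, ∀ x ∈ L a b, dist x a ≤ (lam^2+1) * dist a b + (lam^3 + lam)
  chain : ∀ a b, ∃ (T' : ℝ) (p : ℝ → X), 0 ≤ T' ∧ p 0 = a ∧ p T' = b ∧
    (∀ s ∈ Icc (0:ℝ) T', p s ∈ L a b) ∧
    ∀ s ∈ Icc (0:ℝ) T', ∀ t ∈ Icc (0:ℝ) T', dist (p s) (p t) ≤ lam * |s-t| + lam

def IsGeo {X : Type} [MetricSpace X] (T : ℝ) (g : ℝ → X) : Prop :=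
  0 ≤ T ∧ ∀ s ∈ Icc (0:ℝ) T, ∀ t ∈ Icc (0:ℝ) T, dist (g s) (g t) = |s - t|

noncomputable def cc1 (lam : ℝ) : ℝ := lam^3 + lam
noncomputable def cc2 (lam : ℝ) : ℝ := lam^2 + 1 + lam^3 + lam

variable {X : Type} [MetricSpace X] {lam δ : ℝ} {L : X → X → Set X}

lemma cc2_nonneg (h : 1 ≤ lam) : 0 ≤ cc2 lam := by unfold cc2; nlinarith

/-- log lemma: dyadic subdivision -/
lemma log_lemma (F : Fam lam δ X L) :
    ∀ n : ℕ, ∀ T : ℝ, ∀ g : ℝ → X, IsGeo T g → T ≤ 2^n →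
      ∀ x ∈ L (g 0) (g T), ∃ t ∈ Icc (0:ℝ) T, dist x (g t) ≤ n*δ + cc2 lam := by
  intro n
  induction n with
  | zero =>
    intro T g hg hT x hx
    refine ⟨0, ⟨le_refl _, hg.1⟩, ?_⟩
    have hd : dist (g 0) (g T) = T := by
      rw [hg.2 0 ⟨le_refl _, hg.1⟩ T ⟨hg.1, le_refl _⟩]
      rw [abs_of_nonpos (by linarith [hg.1])]; ring
    have := F.size (g 0) (g T) x hx
    rw [hd] at this
    have hl := F.hlam
    have hT' : T ≤ 1 := by simpa using hT
    simp only [Nat.cast_zero, zero_mul, zero_add]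
    unfold cc2
    have h1 : (lam^2+1) * T ≤ (lam^2+1) * 1 := by nlinarith
    calc dist x (g 0) ≤ (lam^2+1) * T + (lam^3 + lam) := this
      _ ≤ lam ^ 2 + 1 + lam ^ 3 + lam := by linarith
  | succ n ih =>
    intro T g hg hT x hx
    have h0T : (0:ℝ) ≤ T := hg.1
    have hmem : T/2 ∈ Icc (0:ℝ) T := ⟨by linarith, by linarith⟩
    obtain ⟨y, hy, hdxy⟩ := F.thin (g 0) (g T) (g (T/2)) x hx
    have hhalf : T/2 ≤ 2^n := by
      have : (2:ℝ)^(n+1) = 2 * 2^n := by ring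
      rw [this] at hT; linarith
    rcases hy with hy | hy
    · -- y ∈ L (g 0) (g (T/2))
      have hg' : IsGeo (T/2) g := by
        refine ⟨by linarith, fun s hs t ht => hg.2 s ⟨hs.1, le_trans hs.2 (by linarith)⟩
          t ⟨ht.1, le_trans ht.2 (by linarith)⟩⟩
      obtain ⟨t, ht, hdy⟩ := ih (T/2) g hg' hhalf y hy
      refine ⟨t, ⟨ht.1, le_trans ht.2 (by linarith)⟩, ?_⟩
      have : dist x (g t) ≤ dist x y + dist y (g t) := dist_triangle _ _ _
      push_cast
      linarith
    · -- y ∈ L (g (T/2)) (g T)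
      set g' : ℝ → X := fun u => g (T/2 + u) with hg'def
      have hg' : IsGeo (T/2) g' := by
        refine ⟨by linarith, fun s hs t ht => ?_⟩
        have h1 : T/2 + s ∈ Icc (0:ℝ) T := ⟨by linarith [hs.1], by linarith [hs.2]⟩
        have h2 : T/2 + t ∈ Icc (0:ℝ) T := ⟨by linarith [ht.1], by linarith [ht.2]⟩
        have := hg.2 _ h1 _ h2
        simpa [hg'def, add_sub_add_left_eq_sub] using this
      have hy' : y ∈ L (g' 0) (g' (T/2)) := by
        have e1 : g' 0 = g (T/2) := by simp [hg'def]
        have e2 : g' (T/2) = g T := by simp [hg'def]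
        rw [e1, e2]; exact hy
      obtain ⟨t, ht, hdy⟩ := ih (T/2) g' hg' hhalf y hy'
      refine ⟨T/2 + t, ⟨by linarith [ht.1], by linarith [ht.2]⟩, ?_⟩
      have : dist x (g (T/2 + t)) ≤ dist x y + dist y (g (T/2+t)) := dist_triangle _ _ _
      have hdy2 : dist y (g (T/2+t)) ≤ n*δ + cc2 lam := hdy
      push_cast
      linarith

noncomputable def RR (lam δ : ℝ) : ℝ :=
  (80*δ + 16*(cc2 lam) + 43)*δ + cc2 lam + 2*δ + cc1 lam + 2

lemma cc1_nonneg (h : 1 ≤ lam) : (0:ℝ) ≤ cc1 lam := by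
  have h0 : (0:ℝ) < lam := by linarith
  unfold cc1; positivity

lemma RR_nonneg (hl : 1 ≤ lam) (hd : 0 ≤ δ) : 0 ≤ RR lam δ := by
  have h1 := cc2_nonneg hl
  have h2 := cc1_nonneg (lam := lam) hl
  unfold RR; nlinarith

set_option maxHeartbeats 1000000 in
lemma main_bound (F : Fam lam δ X L) (D : ℝ) :
    ∀ T g x, IsGeo T g → T ≤ D → x ∈ L (g 0) (g T) →
      infDist x (g '' Icc 0 T) ≤ RR lam δ := by
  classical
  have hδ := F.hδ
  have hcc2 := cc2_nonneg (lam := lam) F.hlam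
  have hcc1 := cc1_nonneg (lam := lam) F.hlam
  set S : Set ℝ := {r | ∃ T g x, IsGeo T g ∧ T ≤ D ∧ x ∈ L (g 0) (g T) ∧
    r = infDist x (g '' Icc (0:ℝ) T)} with hS
  obtain ⟨nD, hnD⟩ : ∃ n : ℕ, D ≤ (2:ℝ)^n := by
    obtain ⟨n, hn⟩ := exists_nat_gt D
    refine ⟨n, le_trans hn.le ?_⟩
    exact_mod_cast (Nat.lt_two_pow_self (n := n)).le
  have hbdd : BddAbove S := by
    refine ⟨nD*δ + cc2 lam, ?_⟩
    rintro r ⟨T', g', x', hg', hT', hx', rfl⟩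
    obtain ⟨t, ht, hd⟩ := log_lemma F nD T' g' hg' (le_trans hT' hnD) x' hx'
    exact le_trans (infDist_le_dist_of_mem ⟨t, ht, rfl⟩) hd
  obtain ⟨M, hM⟩ : ∃ M : ℝ, M = sSup S := ⟨_, rfl⟩
  have key : M ≤ RR lam δ := by
    by_contra hMR
    push_neg at hMR
    have hSne : S.Nonempty := by
      rcases eq_empty_or_nonempty S with h | h
      · exfalso
        have hM0 : M = 0 := by rw [hM, h, Real.sSup_empty]
        have := RR_nonneg F.hlam F.hδ
        rw [hM0] at hMR; linarith
      · exact h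
    obtain ⟨r, hrS, hrgt⟩ := exists_lt_of_lt_csSup hSne
      (show M - 1 < sSup S by rw [← hM]; linarith)
    have hrM : r ≤ M := by rw [hM]; exact le_csSup hbdd hrS
    obtain ⟨T, g, x, hg, hTD, hx, hre⟩ := hrS
    have hr0 : 0 ≤ r := by rw [hre]; exact infDist_nonneg
    have hM0 : 0 ≤ M := le_trans hr0 hrM
    have h0T := hg.1
    have hne : (g '' Icc (0:ℝ) T).Nonempty := ⟨g 0, 0, ⟨le_refl _, h0T⟩, rfl⟩
    have hlt : infDist x (g '' Icc (0:ℝ) T) < r + 1 := by rw [← hre]; linarith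
    obtain ⟨w, ⟨tp, htp, rfl⟩, hwd⟩ := (infDist_lt_iff hne).1 hlt
    have hlow : ∀ t ∈ Icc (0:ℝ) T, r ≤ dist x (g t) := by
      intro t ht
      rw [hre]; exact infDist_le_dist_of_mem ⟨t, ht, rfl⟩
    set K : ℝ := r + M + 2*δ + 3 with hK
    have hK0 : 0 ≤ K := by rw [hK]; linarith
    set s₁ : ℝ := max 0 (tp - K) with hs₁def
    set s₂ : ℝ := min T (tp + K) with hs₂def
    have hs₁ : s₁ ∈ Icc (0:ℝ) T :=
      ⟨le_max_left _ _, max_le h0T (by linarith [htp.2])⟩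
    have hs₂ : s₂ ∈ Icc (0:ℝ) T :=
      ⟨le_min h0T (by linarith [htp.1]), min_le_left _ _⟩
    have hs₁tp : s₁ ≤ tp := max_le htp.1 (by linarith)
    have htps₂ : tp ≤ s₂ := le_min htp.2 (by linarith)
    -- handy: dist x y₂ small contradiction maker for "small r" cases
    -- Step 1: thinness
    obtain ⟨y₁, hy₁, hdy₁⟩ := F.thin (g 0) (g T) (g s₂) x hx
    rcases hy₁ with hy₁ | hy₁
    · -- y₁ ∈ L (g 0) (g s₂)
      obtain ⟨y₂, hy₂, hdy₂⟩ := F.thin (g 0) (g s₂) (g s₁) y₁ hy₁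
      have hxy₂ : dist x y₂ ≤ 2*δ :=
        le_trans (dist_triangle x y₁ y₂) (by linarith)
      rcases hy₂ with hy₂ | hy₂
      · -- y₂ ∈ L (g 0) (g s₁)
        by_cases hcase : 0 ≤ tp - K
        · -- s₁ = tp - K : numeric contradiction
          have hs₁eq : s₁ = tp - K := max_eq_right hcase
          have hg1 : IsGeo s₁ g := by
            refine ⟨hs₁.1, fun s hs t ht => hg.2 s ⟨hs.1, le_trans hs.2 hs₁.2⟩
              t ⟨ht.1, le_trans ht.2 hs₁.2⟩⟩
          have hin : infDist y₂ (g '' Icc (0:ℝ) s₁) ∈ S := by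
            rw [hS]
            exact ⟨s₁, g, y₂, hg1, le_trans hs₁.2 hTD, hy₂, rfl⟩
          have hle : infDist y₂ (g '' Icc (0:ℝ) s₁) ≤ M := by
            rw [hM]; exact le_csSup hbdd hin
          have hne1 : (g '' Icc (0:ℝ) s₁).Nonempty := ⟨g 0, 0, ⟨le_refl _, hs₁.1⟩, rfl⟩
          obtain ⟨w, ⟨u, hu, rfl⟩, hwu⟩ :=
            (infDist_lt_iff hne1).1 (lt_of_le_of_lt hle (by linarith : M < M + 1))
          have huT : u ∈ Icc (0:ℝ) T := ⟨hu.1, le_trans hu.2 hs₁.2⟩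
          have hd1 : dist (g tp) (g u) = tp - u := by
            rw [hg.2 tp htp u huT, abs_of_nonneg (by linarith [hu.2, hs₁tp])]
          have h2 := dist_triangle (g tp) x (g u)
          have h3 := dist_triangle x y₂ (g u)
          rw [dist_comm (g tp) x] at h2
          have hKu : K ≤ tp - u := by
            have := hu.2; rw [hs₁eq] at this; linarith
          linarith
        · -- s₁ = 0 : small bound on r
          have hs₁eq : s₁ = 0 := max_eq_left (by linarith)
          rw [hs₁eq] at hy₂
          have hsz := F.size (g 0) (g 0) y₂ hy₂
          rw [dist_self] at hsz
          have hr_le : r ≤ dist x (g 0) := hlow 0 ⟨le_refl _, h0T⟩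
          have htr := dist_triangle x y₂ (g 0)
          -- r ≤ 2δ + cc1 + ...
          have hrb : r ≤ 2*δ + (lam^3 + lam) := by linarith
          unfold RR cc1 at hMR
          nlinarith [mul_nonneg (show (0:ℝ) ≤ 80*δ+16*cc2 lam+43 by linarith) hδ]
      · -- y₂ ∈ L (g s₁) (g s₂) : the log-improvement case
        have hpow : ∃ n : ℕ, 4*M + 4*δ + 6 ≤ (2:ℝ)^n := by
          obtain ⟨n, hn⟩ := exists_nat_gt (4*M + 4*δ + 6)
          refine ⟨n, le_trans hn.le ?_⟩
          exact_mod_cast (Nat.lt_two_pow_self (n := n)).le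
        obtain ⟨n, hspec, hmin'⟩ : ∃ n : ℕ, (4*M + 4*δ + 6 ≤ (2:ℝ)^n) ∧
            ∀ m, m < n → ¬(4*M + 4*δ + 6 ≤ (2:ℝ)^m) :=
          ⟨Nat.find hpow, Nat.find_spec hpow, fun m hm => Nat.find_min hpow hm⟩
        have hn1 : 1 ≤ n := by
          by_contra h
          push_neg at h
          have h0 : n = 0 := Nat.lt_one_iff.1 h
          rw [h0] at hspec
          norm_num at hspec
          linarith
        obtain ⟨j, hj⟩ : ∃ j, n = j + 1 := ⟨n - 1, (Nat.succ_pred_eq_of_pos hn1).symm⟩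
        have hmin : (2:ℝ)^j < 4*M + 4*δ + 6 := by
          have := hmin' j (by omega)
          push_neg at this
          exact this
        set gh : ℝ → X := fun u => g (s₁ + u) with hgh
        have hgeo : IsGeo (s₂ - s₁) gh := by
          refine ⟨by linarith [hs₁tp, htps₂], fun s hs t ht => ?_⟩
          have h1 : s₁ + s ∈ Icc (0:ℝ) T := ⟨by linarith [hs.1, hs₁.1], by linarith [hs.2, hs₂.2]⟩
          have h2 : s₁ + t ∈ Icc (0:ℝ) T := ⟨by linarith [ht.1, hs₁.1], by linarith [ht.2, hs₂.2]⟩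
          have := hg.2 _ h1 _ h2
          simpa [hgh, add_sub_add_left_eq_sub] using this
        have hlen : s₂ - s₁ ≤ (2:ℝ)^n := by
          have h1 : s₂ ≤ tp + K := min_le_right _ _
          have h2 : tp - K ≤ s₁ := le_max_right _ _
          have h2K : 2*K ≤ 4*M + 4*δ + 6 := by rw [hK]; linarith
          linarith
        have hy' : y₂ ∈ L (gh 0) (gh (s₂ - s₁)) := by
          have e1 : gh 0 = g s₁ := by simp [hgh]
          have e2 : gh (s₂ - s₁) = g s₂ := by
            simp only [hgh]
            congr 1
            ring
          rw [e1, e2]; exact hy₂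
        obtain ⟨t, ht, hdy⟩ := log_lemma F n (s₂ - s₁) gh hgeo hlen y₂ hy'
        have hmem2 : s₁ + t ∈ Icc (0:ℝ) T :=
          ⟨by linarith [ht.1, hs₁.1], by linarith [ht.2, hs₂.2]⟩
        have hrle : r ≤ dist x (g (s₁+t)) := hlow _ hmem2
        have htr := dist_triangle x y₂ (g (s₁+t))
        have hdy' : dist y₂ (g (s₁+t)) ≤ n*δ + cc2 lam := hdy
        have hfin : r ≤ (n:ℝ)*δ + cc2 lam + 2*δ := by linarith
        have hj2 : ((j:ℝ))^2 ≤ 4*2^j := sq_le_four_two_pow j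
        have hcast : (n:ℝ) = (j:ℝ) + 1 := by rw [hj]; push_cast; ring
        rw [hcast] at hfin
        -- 2^j < 4M+4δ+6 ≤ 4(r+1)+4δ+6 ≤ 4((j+3)δ + c₂ + 1) + 4δ + 6
        have hMr : M < r + 1 := by linarith
        have h2j : (2:ℝ)^j < 4*δ*(j:ℝ) + (16*δ + 4*cc2 lam + 10) := by nlinarith
        have hjsq : ((j:ℝ))^2 < 16*δ*(j:ℝ) + (64*δ + 16*cc2 lam + 40) := by nlinarith
        by_cases hjbig : (80*δ + 16*cc2 lam + 40) ≤ (j:ℝ)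
        · exfalso
          have hj1 : (1:ℝ) ≤ (j:ℝ) := by linarith
          have e1 : (j:ℝ)*(80*δ + 16*cc2 lam + 40) ≤ (j:ℝ)*(j:ℝ) :=
            mul_le_mul_of_nonneg_left hjbig (by positivity)
          have e2 : 0 ≤ (64*δ + 16*cc2 lam + 40) * ((j:ℝ) - 1) :=
            mul_nonneg (by linarith) (by linarith)
          nlinarith [e1, e2, hjsq]
        · push_neg at hjbig
          have e3 : (j:ℝ)*δ ≤ (80*δ + 16*cc2 lam + 40)*δ :=
            mul_le_mul_of_nonneg_right hjbig.le hδ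
          unfold RR at hMR
          nlinarith [e3, hfin, hMr, hMR, hδ, hcc1]
    · -- y₁ ∈ L (g s₂) (g T)
      by_cases hcase : tp + K ≤ T
      · -- s₂ = tp + K : numeric contradiction
        have hs₂eq : s₂ = tp + K := min_eq_right hcase
        set gh : ℝ → X := fun u => g (s₂ + u) with hgh
        have hgeo : IsGeo (T - s₂) gh := by
          refine ⟨by linarith [hs₂.2], fun s hs t ht => ?_⟩
          have h1 : s₂ + s ∈ Icc (0:ℝ) T := ⟨by linarith [hs.1, hs₂.1], by linarith [hs.2]⟩
          have h2 : s₂ + t ∈ Icc (0:ℝ) T := ⟨by linarith [ht.1, hs₂.1], by linarith [ht.2]⟩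
          have := hg.2 _ h1 _ h2
          simpa [hgh, add_sub_add_left_eq_sub] using this
        have hy' : y₁ ∈ L (gh 0) (gh (T - s₂)) := by
          have e1 : gh 0 = g s₂ := by simp [hgh]
          have e2 : gh (T - s₂) = g T := by
            simp only [hgh]; congr 1; ring
          rw [e1, e2]; exact hy₁
        have hin : infDist y₁ (gh '' Icc (0:ℝ) (T - s₂)) ∈ S := by
          rw [hS]
          exact ⟨T - s₂, gh, y₁, hgeo, by linarith [hs₂.1], hy', rfl⟩
        have hle : infDist y₁ (gh '' Icc (0:ℝ) (T-s₂)) ≤ M := by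
          rw [hM]; exact le_csSup hbdd hin
        have hne1 : (gh '' Icc (0:ℝ) (T-s₂)).Nonempty :=
          ⟨gh 0, 0, ⟨le_refl _, by linarith [hs₂.2]⟩, rfl⟩
        obtain ⟨w, ⟨u, hu, rfl⟩, hwu⟩ :=
          (infDist_lt_iff hne1).1 (lt_of_le_of_lt hle (by linarith : M < M + 1))
        have huT : s₂ + u ∈ Icc (0:ℝ) T := ⟨by linarith [hu.1, hs₂.1], by linarith [hu.2]⟩
        have hd1 : dist (g tp) (g (s₂+u)) = s₂ + u - tp := by
          rw [hg.2 tp htp _ huT, abs_of_nonpos (by linarith [hu.1, htps₂])]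
          ring
        have h2 := dist_triangle (g tp) x (g (s₂+u))
        have h3 := dist_triangle x y₁ (g (s₂+u))
        rw [dist_comm (g tp) x] at h2
        have hwu' : dist y₁ (g (s₂+u)) < M + 1 := hwu
        have hKu : K ≤ s₂ + u - tp := by rw [hs₂eq]; linarith [hu.1]
        linarith
      · -- s₂ = T : small bound on r
        push_neg at hcase
        have hs₂eq : s₂ = T := min_eq_left (le_of_lt hcase)
        rw [hs₂eq] at hy₁
        have hsz := F.size (g T) (g T) y₁ hy₁
        rw [dist_self] at hsz
        have hr_le : r ≤ dist x (g T) := hlow T ⟨h0T, le_refl _⟩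
        have htr := dist_triangle x y₁ (g T)
        have hrb : r ≤ 2*δ + (lam^3 + lam) := by linarith
        unfold RR cc1 at hMR
        nlinarith [mul_nonneg (show (0:ℝ) ≤ 80*δ+16*cc2 lam+43 by linarith) hδ]
  intro T g x hg hTD hx
  have hmem : infDist x (g '' Icc (0:ℝ) T) ∈ S := by
    rw [hS]; exact ⟨T, g, x, hg, hTD, hx, rfl⟩
  have h1 : infDist x (g '' Icc (0:ℝ) T) ≤ M := by
    rw [hM]; exact le_csSup hbdd hmem
  exact le_trans h1 key

lemma near_geo (F : Fam lam δ X L) {T : ℝ} {g : ℝ → X} (hg : IsGeo T g)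
    {x : X} (hx : x ∈ L (g 0) (g T)) :
    ∃ t ∈ Icc (0:ℝ) T, dist x (g t) ≤ RR lam δ + 1 := by
  have h := main_bound F T T g x hg (le_refl T) hx
  have hne : (g '' Icc (0:ℝ) T).Nonempty := ⟨g 0, 0, ⟨le_refl _, hg.1⟩, rfl⟩
  obtain ⟨w, ⟨t, ht, rfl⟩, hd⟩ := (infDist_lt_iff hne).1
    (lt_of_le_of_lt h (by linarith : RR lam δ < RR lam δ + 1))
  exact ⟨t, ht, hd.le⟩

lemma geo_near (F : Fam lam δ X L) {T : ℝ} {g : ℝ → X} (hg : IsGeo T g) :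
    ∀ t ∈ Icc (0:ℝ) T, ∃ y ∈ L (g 0) (g T),
      dist (g t) y ≤ 2*(RR lam δ + 1) + lam := by
  intro t ht
  have hlam := F.hlam
  have hδ := F.hδ
  obtain ⟨T', p, hT'0, hp0, hpT, hpL, hplip⟩ := F.chain (g 0) (g T)
  obtain ⟨R1, hR1⟩ : ∃ R1 : ℝ, R1 = RR lam δ + 1 := ⟨_, rfl⟩
  have hR10 : 0 < R1 := by have := RR_nonneg F.hlam F.hδ; rw [hR1]; linarith
  have hσmem : ∀ k : ℕ, min (k:ℝ) T' ∈ Icc (0:ℝ) T' :=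
    fun k => ⟨le_min (Nat.cast_nonneg k) hT'0, min_le_right _ _⟩
  have hsel : ∀ k : ℕ, ∃ u ∈ Icc (0:ℝ) T, dist (p (min (k:ℝ) T')) (g u) ≤ R1 := by
    intro k
    obtain ⟨u, hu, hd⟩ := near_geo F hg (hpL _ (hσmem k))
    exact ⟨u, hu, by rw [hR1]; exact hd⟩
  choose τ hτmem hτd using hsel
  have hstep : ∀ k : ℕ, |τ (k+1) - τ k| ≤ 2*R1 + 2*lam := by
    intro k
    have hσ1 : ((k+1 : ℕ):ℝ) = (k:ℝ) + 1 := by push_cast; ring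
    have hdmin : |min ((k:ℝ)+1) T' - min (k:ℝ) T'| ≤ 1 := by
      rcases le_total T' (k:ℝ) with h | h
      · rw [min_eq_right h, min_eq_right (by linarith)]
        simp
      · rw [min_eq_left h]
        rcases le_total ((k:ℝ)+1) T' with h2 | h2
        · rw [min_eq_left h2]; simp
        · rw [min_eq_right h2]
          rw [abs_of_nonneg (by linarith)]; linarith
    have hp12 : dist (p (min ((k:ℝ)+1) T')) (p (min (k:ℝ) T')) ≤ 2*lam := by
      have h := hplip _ (hσ1 ▸ hσmem (k+1)) _ (hσmem k)
      nlinarith [abs_nonneg (min ((k:ℝ)+1) T' - min (k:ℝ) T')]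
    have habs : |τ (k+1) - τ k| = dist (g (τ (k+1))) (g (τ k)) :=
      (hg.2 _ (hτmem _) _ (hτmem _)).symm
    rw [habs]
    have t1 := dist_triangle4 (g (τ (k+1))) (p (min ((k:ℝ)+1) T')) (p (min (k:ℝ) T')) (g (τ k))
    have d1 : dist (g (τ (k+1))) (p (min ((k:ℝ)+1) T')) ≤ R1 := by
      rw [dist_comm]
      have := hτd (k+1)
      rwa [hσ1] at this
    have d3 := hτd k
    linarith
  have hτ0 : τ 0 ≤ R1 := by
    have hσ0 : min ((0:ℕ):ℝ) T' = 0 := by simp [hT'0]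
    have := hτd 0
    rw [hσ0, hp0] at this
    have habs : |τ 0 - 0| = dist (g (τ 0)) (g 0) :=
      (hg.2 _ (hτmem 0) _ ⟨le_refl _, hg.1⟩).symm
    rw [dist_comm] at this
    have h0 : 0 ≤ τ 0 := (hτmem 0).1
    rw [sub_zero, abs_of_nonneg h0] at habs
    linarith [habs ▸ this]
  obtain ⟨N, hN⟩ : ∃ N : ℕ, T' ≤ (N:ℝ) := ⟨⌈T'⌉₊, Nat.le_ceil T'⟩
  have hτN : T - R1 ≤ τ N := by
    have hσN : min ((N:ℕ):ℝ) T' = T' := min_eq_right hN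
    have hd := hτd N
    rw [hσN, hpT] at hd
    have habs : |T - τ N| = dist (g T) (g (τ N)) :=
      (hg.2 _ ⟨hg.1, le_refl _⟩ _ (hτmem N)).symm
    have h3 : |T - τ N| ≤ R1 := by rw [habs]; exact hd
    linarith [(abs_le.1 h3).2]
  have hfind : ∃ k : ℕ, |τ k - t| ≤ R1 + lam := by
    by_contra hcon
    push_neg at hcon
    have hind : ∀ k : ℕ, τ k < t - (R1 + lam) := by
      intro k
      induction k with
      | zero =>
        rcases le_or_gt t (τ 0) with h | h
        · exfalso
          have := hcon 0
          rw [abs_of_nonneg (by linarith)] at this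
          linarith [ht.1]
        · have := hcon 0
          rw [abs_of_nonpos (by linarith)] at this
          linarith
      | succ k ih =>
        have h1 := hstep k
        have h2 := abs_le.1 h1
        rcases le_or_gt t (τ (k+1)) with h | h
        · exfalso
          have := hcon (k+1)
          rw [abs_of_nonneg (by linarith)] at this
          linarith [h2.2]
        · have := hcon (k+1)
          rw [abs_of_nonpos (by linarith)] at this
          linarith
    have := hind N
    linarith [ht.2]
  obtain ⟨k, hk⟩ := hfind
  refine ⟨p (min (k:ℝ) T'), hpL _ (hσmem k), ?_⟩
  have habs : |t - τ k| = dist (g t) (g (τ k)) := (hg.2 _ ht _ (hτmem k)).symm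
  have htri := dist_triangle (g t) (g (τ k)) (p (min (k:ℝ) T'))
  have h2 : dist (g (τ k)) (p (min (k:ℝ) T')) ≤ R1 := by rw [dist_comm]; exact hτd k
  have h3 : |t - τ k| ≤ R1 + lam := by rw [abs_sub_comm]; exact hk
  rw [hR1] at *
  linarith [habs ▸ h3]

noncomputable def delta' (lam δ : ℝ) : ℝ := 3*(RR lam δ + 1) + lam + δ

lemma side_lemma (F : Fam lam δ X L) {T T' T'' : ℝ} {g h k : ℝ → X}
    (hg : IsGeo T g) (hh : IsGeo T' h) (hk : IsGeo T'' k)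
    (e₁ : g T = h 0) (e₂ : h T' = k 0) (e₃ : k T'' = g 0) :
    ∀ s ∈ Icc (0:ℝ) T, ∃ u ∈ (h '' Icc (0:ℝ) T') ∪ (k '' Icc (0:ℝ) T''),
      dist (g s) u ≤ delta' lam δ := by
  intro s hs
  obtain ⟨y, hy, hdy⟩ := geo_near F hg s hs
  obtain ⟨z, hz, hdz⟩ := F.thin (g 0) (g T) (h T') y hy
  rcases hz with hz | hz
  · have hE : L (g 0) (h T') = L (k 0) (k T'') := by
      rw [← e₃, e₂, F.symm]
    rw [hE] at hz
    obtain ⟨tt, htt, hdzk⟩ := near_geo F hk hz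
    refine ⟨k tt, Or.inr ⟨tt, htt, rfl⟩, ?_⟩
    have t1 := dist_triangle4 (g s) y z (k tt)
    unfold delta'
    linarith
  · have hE : L (h T') (g T) = L (h 0) (h T') := by
      rw [e₁, F.symm]
    rw [hE] at hz
    obtain ⟨tt, htt, hdzk⟩ := near_geo F hh hz
    refine ⟨h tt, Or.inl ⟨tt, htt, rfl⟩, ?_⟩
    have t1 := dist_triangle4 (g s) y z (h tt)
    unfold delta'
    linarith




/-- Bowditch/Masur–Minsky hyperbolicity criterion.  If a geodesic metric space
carries a family of `(λ,λ)`-quasi-geodesic paths joining every ordered pair of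
points, all of whose triangles are `δ`-thin, then every geodesic triangle is
`δ'`-thin, where `δ'` depends only on `λ` and `δ`.  Paths are encoded as pairs
`(T, γ)` with `γ` restricted to `[0,T]`. -/
theorem stmt8 (lam δ : ℝ) (hlam : 1 ≤ lam) (hδ : 0 ≤ δ) :
    ∃ δ' : ℝ, ∀ (X : Type) [MetricSpace X],
      -- X is geodesic
      (∀ x y : X, ∃ (T : ℝ) (g : ℝ → X), 0 ≤ T ∧ g 0 = x ∧ g T = y ∧
        ∀ s ∈ Set.Icc (0:ℝ) T, ∀ t ∈ Set.Icc (0:ℝ) T, dist (g s) (g t) = |s - t|) →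
      ∀ P : Set (ℝ × (ℝ → X)),
        (∀ p ∈ P, 0 ≤ p.1) →
        -- every ordered pair of points is joined by a path of the family
        (∀ x y : X, ∃ p ∈ P, p.2 0 = x ∧ p.2 p.1 = y) →
        -- each path of the family is a (λ,λ)-quasi-geodesic
        (∀ p ∈ P, ∀ s ∈ Set.Icc (0:ℝ) p.1, ∀ t ∈ Set.Icc (0:ℝ) p.1,
          (1 / lam) * |s - t| - lam ≤ dist (p.2 s) (p.2 t) ∧
            dist (p.2 s) (p.2 t) ≤ lam * |s - t| + lam) →
        -- triangles of paths of the family are δ-thin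
        (∀ p ∈ P, ∀ q ∈ P, ∀ r ∈ P,
          p.2 p.1 = q.2 0 → q.2 q.1 = r.2 0 → r.2 r.1 = p.2 0 →
          (∀ s ∈ Set.Icc (0:ℝ) p.1,
            ∃ u ∈ (q.2 '' Set.Icc (0:ℝ) q.1) ∪ (r.2 '' Set.Icc (0:ℝ) r.1),
              dist (p.2 s) u ≤ δ) ∧
          (∀ s ∈ Set.Icc (0:ℝ) q.1,
            ∃ u ∈ (p.2 '' Set.Icc (0:ℝ) p.1) ∪ (r.2 '' Set.Icc (0:ℝ) r.1),
              dist (q.2 s) u ≤ δ) ∧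
          (∀ s ∈ Set.Icc (0:ℝ) r.1,
            ∃ u ∈ (p.2 '' Set.Icc (0:ℝ) p.1) ∪ (q.2 '' Set.Icc (0:ℝ) q.1),
              dist (r.2 s) u ≤ δ)) →
        -- conclusion: every geodesic triangle is δ'-thin
        ∀ (T₁ T₂ T₃ : ℝ) (g₁ g₂ g₃ : ℝ → X),
          0 ≤ T₁ → 0 ≤ T₂ → 0 ≤ T₃ →
          (∀ s ∈ Set.Icc (0:ℝ) T₁, ∀ t ∈ Set.Icc (0:ℝ) T₁,
            dist (g₁ s) (g₁ t) = |s - t|) →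
          (∀ s ∈ Set.Icc (0:ℝ) T₂, ∀ t ∈ Set.Icc (0:ℝ) T₂,
            dist (g₂ s) (g₂ t) = |s - t|) →
          (∀ s ∈ Set.Icc (0:ℝ) T₃, ∀ t ∈ Set.Icc (0:ℝ) T₃,
            dist (g₃ s) (g₃ t) = |s - t|) →
          g₁ T₁ = g₂ 0 → g₂ T₂ = g₃ 0 → g₃ T₃ = g₁ 0 →
          (∀ s ∈ Set.Icc (0:ℝ) T₁,
            ∃ u ∈ (g₂ '' Set.Icc (0:ℝ) T₂) ∪ (g₃ '' Set.Icc (0:ℝ) T₃),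
              dist (g₁ s) u ≤ δ') ∧
          (∀ s ∈ Set.Icc (0:ℝ) T₂,
            ∃ u ∈ (g₁ '' Set.Icc (0:ℝ) T₁) ∪ (g₃ '' Set.Icc (0:ℝ) T₃),
              dist (g₂ s) u ≤ δ') ∧
          (∀ s ∈ Set.Icc (0:ℝ) T₃,
            ∃ u ∈ (g₁ '' Set.Icc (0:ℝ) T₁) ∪ (g₂ '' Set.Icc (0:ℝ) T₂),
              dist (g₃ s) u ≤ δ') := by
  refine ⟨delta' lam δ, ?_⟩
  intro X _ hgeo P hpos hjoin hquasi htri T₁ T₂ T₃ g₁ g₂ g₃ hT₁ hT₂ hT₃ hgeo₁ hgeo₂ hgeo₃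
    e₁ e₂ e₃
  choose pa hpaP hpa0 hpaT using hjoin
  set L : X → X → Set X := fun a b =>
    ((pa a b).2 '' Icc (0:ℝ) (pa a b).1) ∪ ((pa b a).2 '' Icc (0:ℝ) (pa b a).1) with hL
  have hlam0 : (0:ℝ) < lam := by linarith
  -- size estimate for single paths
  have hsize1 : ∀ a b : X, ∀ s ∈ Icc (0:ℝ) (pa a b).1,
      dist ((pa a b).2 s) a ≤ lam^2 * dist a b + (lam^3 + lam) := by
    intro a b s hs
    have hmemT : (pa a b).1 ∈ Icc (0:ℝ) (pa a b).1 := ⟨hpos _ (hpaP a b), le_refl _⟩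
    have hmem0 : (0:ℝ) ∈ Icc (0:ℝ) (pa a b).1 := ⟨le_refl _, hpos _ (hpaP a b)⟩
    have hlow := (hquasi _ (hpaP a b) 0 hmem0 (pa a b).1 hmemT).1
    rw [hpa0, hpaT] at hlow
    have habs : |(0:ℝ) - (pa a b).1| = (pa a b).1 := by
      rw [abs_of_nonpos (by linarith [hpos _ (hpaP a b)])]; ring
    rw [habs] at hlow
    have hlen : (pa a b).1 ≤ lam * dist a b + lam^2 := by
      have h2 : (1/lam) * (pa a b).1 ≤ dist a b + lam := by linarith
      have h3 := mul_le_mul_of_nonneg_left h2 (le_of_lt hlam0)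
      have h4 : lam * ((1/lam) * (pa a b).1) = (pa a b).1 := by
        field_simp
      rw [h4] at h3
      nlinarith
    have hup := (hquasi _ (hpaP a b) s hs 0 hmem0).2
    rw [hpa0] at hup
    have habs2 : |s - 0| = s := by rw [sub_zero, abs_of_nonneg hs.1]
    rw [habs2] at hup
    have hd0 : 0 ≤ dist a b := dist_nonneg
    nlinarith [hs.2]
  have F : Fam lam δ X L :=
    { hlam := hlam
      hδ := hδ
      symm := fun a b => Set.union_comm _ _
      mem_left := fun a b =>
        Or.inl ⟨0, ⟨le_refl _, hpos _ (hpaP a b)⟩, hpa0 a b⟩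
      thin := by
        intro a b c x hx
        rcases hx with ⟨s, hs, rfl⟩ | ⟨s, hs, rfl⟩
        · have ht := (htri _ (hpaP a b) _ (hpaP b c) _ (hpaP c a)
            (by rw [hpaT, hpa0]) (by rw [hpaT, hpa0]) (by rw [hpaT, hpa0])).1 s hs
          obtain ⟨u, hu, hdu⟩ := ht
          refine ⟨u, ?_, hdu⟩
          rcases hu with hu | hu
          · exact Or.inr (Or.inr hu)
          · exact Or.inl (Or.inr hu)
        · have ht := (htri _ (hpaP b a) _ (hpaP a c) _ (hpaP c b)
            (by rw [hpaT, hpa0]) (by rw [hpaT, hpa0]) (by rw [hpaT, hpa0])).1 s hs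
          obtain ⟨u, hu, hdu⟩ := ht
          refine ⟨u, ?_, hdu⟩
          rcases hu with hu | hu
          · exact Or.inl (Or.inl hu)
          · exact Or.inr (Or.inl hu)
      size := by
        intro a b x hx
        have hd0 : 0 ≤ dist a b := dist_nonneg
        rcases hx with ⟨s, hs, rfl⟩ | ⟨s, hs, rfl⟩
        · have := hsize1 a b s hs
          nlinarith
        · have h1 := hsize1 b a s hs
          have h2 := dist_triangle ((pa b a).2 s) b a
          rw [dist_comm b a] at *
          nlinarith
      chain := by
        intro a b
        refine ⟨(pa a b).1, (pa a b).2, hpos _ (hpaP a b), hpa0 a b, hpaT a b,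
          fun s hs => Or.inl ⟨s, hs, rfl⟩, fun s hs u hu => (hquasi _ (hpaP a b) s hs u hu).2⟩ }
  have hg1 : IsGeo T₁ g₁ := ⟨hT₁, hgeo₁⟩
  have hg2 : IsGeo T₂ g₂ := ⟨hT₂, hgeo₂⟩
  have hg3 : IsGeo T₃ g₃ := ⟨hT₃, hgeo₃⟩
  refine ⟨side_lemma F hg1 hg2 hg3 e₁ e₂ e₃, ?_, side_lemma F hg3 hg1 hg2 e₃ e₁ e₂⟩
  intro s hs
  obtain ⟨u, hu, hd⟩ := side_lemma F hg2 hg3 hg1 e₂ e₃ e₁ s hs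
  refine ⟨u, ?_, hd⟩
  rcases hu with h | h
  · exact Or.inr h
  · exact Or.inl h
end

section
/- Let V be an immersed edge path in a graph G beginning and ending at a vertex P with distinct initial and terminal directions, let W be a nontrivial initial edge subpath of V ending at a vertex Q, let V' = [W⁻¹ V W] (tightened), and let X and Y be immersed edge paths starting at P and Q respectively such that the concatenation WY is immersed. Then the maximal common initial subpath of X, WY, and [W V' Y] has the form V^N W' for some integer N ≥ 0 and some initial subpath W' of V. -/
/-- A (combinatorial) graph given by its set of oriented edges: `init e` is
the initial vertex of `e` and `bar e` is `e` with the reversed orientation. -/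
structure GraphData (V E : Type*) where
  init : E → V
  bar : E → E
  bar_bar : ∀ e, bar (bar e) = e
  bar_ne : ∀ e, bar e ≠ e

namespace GraphData

variable {V E : Type*} (G : GraphData V E)

/-- The terminal vertex of an oriented edge. -/
def term (e : E) : V := G.init (G.bar e)

/-- An edge path: consecutive edges are concatenable. -/
def IsEdgePath (p : List E) : Prop :=
  List.Chain' (fun e f => G.term e = G.init f) p

/-- A reduced (immersed) edge path: an edge path with no backtracking. -/
def IsReducedPath (p : List E) : Prop :=
  G.IsEdgePath p ∧ List.Chain' (fun e f => f ≠ G.bar e) p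

def StartsAt (p : List E) (v : V) : Prop :=
  ∃ e, p.head? = some e ∧ G.init e = v

def EndsAt (p : List E) (v : V) : Prop :=
  ∃ e, p.getLast? = some e ∧ G.term e = v

/-- A nontrivial reduced closed path based at `v`. -/
def IsLoopAt (p : List E) (v : V) : Prop :=
  G.IsReducedPath p ∧ p ≠ [] ∧ G.StartsAt p v ∧ G.EndsAt p v

/-- A nontrivial reduced closed path. -/
def IsLoop (p : List E) : Prop := ∃ v, G.IsLoopAt p v

/-- A closed path is cyclically reduced if there is no backtracking at the
basepoint either. -/
def IsCyclicallyReduced (p : List E) : Prop :=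
  ∀ e f, p.head? = some e → p.getLast? = some f → e ≠ G.bar f

/-- The reverse of an edge path. -/
def reversePath (p : List E) : List E := (p.map G.bar).reverse

/-- The number of times `p` crosses the unoriented edge underlying `e`. -/
def crossings [DecidableEq E] (p : List E) (e : E) : ℕ :=
  p.count e + p.count (G.bar e)

end GraphData

/-- The length of an edge path with respect to edge lengths `ℓ`. -/
def pathLen {E : Type*} (ℓ : E → ℝ) (p : List E) : ℝ := (p.map ℓ).sum

/-- The element of `F` obtained by multiplying the labels along a path. -/
def pathLabel {E F : Type*} [Group F] (lab : E → F) (p : List E) : F :=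
  (p.map lab).prod

/-- A labelling `lab : E → F` of the edges of `G` is a marking (encodes a
homotopy equivalence from `G` to a rose for `F`, based at `v₀`) if it is
compatible with reversal, injective on `π₁` (no nontrivial reduced loop has
trivial label), surjective on `π₁`, and `G` is connected. -/
def IsMarking {V E F : Type*} [Group F] (G : GraphData V E)
    (lab : E → F) (v₀ : V) : Prop :=
  (∀ e, lab (G.bar e) = (lab e)⁻¹) ∧
  (∀ p, G.IsReducedPath p → p ≠ [] → G.StartsAt p v₀ → G.EndsAt p v₀ →
    pathLabel lab p ≠ 1) ∧
  (∀ g : F, ∃ p, G.IsEdgePath p ∧ (p = [] ∨ (G.StartsAt p v₀ ∧ G.EndsAt p v₀)) ∧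
    pathLabel lab p = g) ∧
  (∀ v : V, v = v₀ ∨ ∃ p, G.IsEdgePath p ∧ G.StartsAt p v₀ ∧ G.EndsAt p v)

/-- `A` is a free factor of `F`: there is a subgroup `B` such that the natural
map `A ∗ B → F` from the free product is an isomorphism. -/
def IsFreeFactor {F : Type*} [Group F] (A : Subgroup F) : Prop :=
  ∃ B : Subgroup F, Function.Bijective (Monoid.Coprod.lift A.subtype B.subtype)

namespace GraphData

variable {V E : Type*} (G : GraphData V E)

/-- One elementary cancellation of a backtracking pair `e, ē`. -/
def OneStepReduce (p q : List E) : Prop :=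
  ∃ (l r : List E) (e : E), p = l ++ e :: G.bar e :: r ∧ q = l ++ r

/-- `q` is the tightening `[p]` of `p`: the reduced path obtained from `p` by
cancelling backtracking. -/
def Tightening (p q : List E) : Prop :=
  Relation.ReflTransGen G.OneStepReduce p q ∧ G.IsReducedPath q

end GraphData

namespace GraphData

variable {V E : Type*} (G : GraphData V E)

-- encoding into FreeGroup alphabet
def prel : E → E → Prop := fun e f => f = e ∨ f = G.bar e

lemma prel_equiv : Equivalence G.prel := by
  constructor
  · intro e; exact Or.inl rfl
  · intro e f h
    rcases h with rfl | rfl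
    · exact Or.inl rfl
    · exact Or.inr (G.bar_bar e).symm
  · intro e f g h1 h2
    rcases h1 with rfl | rfl
    · exact h2
    · rcases h2 with rfl | h2
      · exact Or.inr rfl
      · rw [G.bar_bar] at h2
        exact Or.inl h2

def psetoid : Setoid E := ⟨G.prel, G.prel_equiv⟩

open scoped Classical in
noncomputable def enc (e : E) : E × Bool :=
  ((Quotient.mk G.psetoid e).out, if e = (Quotient.mk G.psetoid e).out then true else false)

lemma out_mem (e : E) : (Quotient.mk G.psetoid e).out = e ∨
    (Quotient.mk G.psetoid e).out = G.bar e := by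
  have h : G.prel (Quotient.mk G.psetoid e).out e :=
    Quotient.exact ((Quotient.mk G.psetoid e).out_eq)
  revert h
  generalize (Quotient.mk G.psetoid e).out = x
  rintro (h | h)
  · exact Or.inl h.symm
  · right
    rw [h, G.bar_bar]

lemma mk_bar (e : E) : Quotient.mk G.psetoid (G.bar e) = Quotient.mk G.psetoid e :=
  Quotient.sound (Or.inr (G.bar_bar e).symm)

open scoped Classical in
lemma enc_bar (e : E) : G.enc (G.bar e) = ((G.enc e).1, !(G.enc e).2) := by
  unfold enc
  rw [mk_bar]
  rcases G.out_mem e with h | h <;> rw [h]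
  · simp [G.bar_ne e]
  · have h1 : e ≠ G.bar e := fun he => (G.bar_ne e) he.symm
    simp [h1]

lemma enc_inj : Function.Injective G.enc := by
  intro e f h
  have hfst : (Quotient.mk G.psetoid e).out = (Quotient.mk G.psetoid f).out := by
    have := congrArg Prod.fst h
    simpa [enc] using this
  have h1 : Quotient.mk G.psetoid e = Quotient.mk G.psetoid f := by
    calc Quotient.mk G.psetoid e = Quotient.mk G.psetoid ((Quotient.mk G.psetoid e).out) := by
          rw [Quotient.out_eq]
      _ = Quotient.mk G.psetoid ((Quotient.mk G.psetoid f).out) := by rw [hfst]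
      _ = Quotient.mk G.psetoid f := by rw [Quotient.out_eq]
  rcases Quotient.exact h1 with h2 | h2
  · exact h2.symm
  · exfalso
    rw [h2, enc_bar] at h
    have := congrArg Prod.snd h
    simp at this

lemma step_enc {p q : List E} (h : G.OneStepReduce p q) :
    FreeGroup.Red.Step (p.map G.enc) (q.map G.enc) := by
  obtain ⟨l, r, e, rfl, rfl⟩ := h
  have : (l ++ e :: G.bar e :: r).map G.enc
      = l.map G.enc ++ ((G.enc e).1, (G.enc e).2) :: ((G.enc e).1, !(G.enc e).2) :: r.map G.enc := by
    simp [enc_bar]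
  rw [this, List.map_append]
  exact FreeGroup.Red.Step.not

lemma red_enc {p q : List E} (h : Relation.ReflTransGen G.OneStepReduce p q) :
    FreeGroup.Red (p.map G.enc) (q.map G.enc) :=
  Relation.ReflTransGen.lift (List.map G.enc) (fun _ _ hs => G.step_enc hs) _ _ h

lemma no_step_of_reduced {p : List E} (h : G.IsReducedPath p) {L : List (E × Bool)}
    (hs : FreeGroup.Red.Step (p.map G.enc) L) : False := by
  have hch : List.Chain' (fun a b => b ≠ (a.1, !a.2)) (p.map G.enc) := by
    show List.IsChain _ _
    rw [List.isChain_map]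
    refine List.IsChain.imp ?_ h.2
    intro e f hne heq
    apply hne
    apply G.enc_inj
    rw [heq, enc_bar]
  generalize hM : p.map G.enc = M at hs hch
  cases hs with
  | @not L₁ L₂ x b =>
    have : List.Chain' (fun a b => b ≠ (a.1, !a.2)) [(x, b), (x, !b)] :=
      hch.infix ⟨L₁, L₂, by simp⟩
    replace this := List.isChain_pair.mp this
    exact this rfl

lemma red_eq_of_reduced {p : List E} (h : G.IsReducedPath p) {L : List (E × Bool)}
    (hr : FreeGroup.Red (p.map G.enc) L) : p.map G.enc = L := by
  rcases Relation.ReflTransGen.cases_head hr with heq | ⟨c, hc, _⟩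
  · exact heq
  · exact absurd hc (fun hs => G.no_step_of_reduced h hs)

lemma tight_unique {p q₁ q₂ : List E} (h1 : G.Tightening p q₁) (h2 : G.Tightening p q₂) :
    q₁ = q₂ := by
  obtain ⟨L, r1, r2⟩ := FreeGroup.Red.church_rosser (G.red_enc h1.1) (G.red_enc h2.1)
  have e1 := G.red_eq_of_reduced h1.2 r1
  have e2 := G.red_eq_of_reduced h2.2 r2
  exact List.map_injective_iff.mpr G.enc_inj (e1.trans e2.symm)

lemma revcancel : ∀ (W t : List E),
    Relation.ReflTransGen G.OneStepReduce (G.reversePath W ++ (W ++ t)) t := by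
  intro W
  induction W with
  | nil =>
    intro t
    simp only [reversePath, List.map_nil, List.reverse_nil, List.nil_append]
    exact Relation.ReflTransGen.refl
  | cons e w ih =>
    intro t
    have hrev : G.reversePath (e :: w) = G.reversePath w ++ [G.bar e] := by
      simp [reversePath]
    rw [hrev]
    refine Relation.ReflTransGen.head ?_ (ih t)
    refine ⟨G.reversePath w, w ++ t, G.bar e, ?_, rfl⟩
    rw [G.bar_bar]
    simp

end GraphData

-- generic chain' helpers
lemma chain_rot {α : Type*} {R : α → α → Prop} {W U : List α} {e₀ eL : α}
    (h : List.Chain' R (W ++ U)) (hW : W ≠ []) (hhead : (W ++ U).head? = some e₀)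
    (hlast : (W ++ U).getLast? = some eL) (hR : R eL e₀) :
    List.Chain' R (U ++ W) := by
  rcases List.isChain_append.1 h with ⟨h1, h2, _⟩
  rcases eq_or_ne U [] with rfl | hU
  · exact h1
  · refine List.isChain_append.2 ⟨h2, h1, ?_⟩
    intro x hx y hy
    have hx' : U.getLast? = some eL := by
      rwa [List.getLast?_append_of_ne_nil _ hU] at hlast
    have hy' : W.head? = some e₀ := by
      rwa [List.head?_append_of_ne_nil _ hW] at hhead
    rw [hx'] at hx
    rw [hy'] at hy
    cases hx; cases hy
    exact hR

lemma chain_glue {α : Type*} {R : α → α → Prop} {V S : List α} {e₀ eL : α}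
    (hV : List.Chain' R V) (hS : List.Chain' R S)
    (hlast : V.getLast? = some eL) (hhead : S.head? = some e₀) (hR : R eL e₀) :
    List.Chain' R (V ++ S) := by
  refine List.isChain_append.2 ⟨hV, hS, ?_⟩
  intro x hx y hy
  rw [hlast] at hx; rw [hhead] at hy
  cases hx; cases hy
  exact hR

lemma key_prefix {α : Type*} (Vl : List α) (hne : Vl ≠ []) :
    ∀ (n : ℕ) (C S : List α), C.length ≤ n → C <+: S → C <+: Vl ++ S →
      ∃ (N : ℕ) (W' : List α), W' <+: Vl ∧ C = (List.replicate N Vl).flatten ++ W' := by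
  intro n
  induction n with
  | zero =>
    intro C S hlen _ _
    have : C = [] := List.length_eq_zero_iff.mp (Nat.le_zero.mp hlen)
    exact ⟨0, [], List.nil_prefix, by simp [this]⟩
  | succ n ih =>
    intro C S hlen hCS hCVS
    by_cases hle : C.length ≤ Vl.length
    · exact ⟨0, C, List.prefix_of_prefix_length_le hCVS (List.prefix_append _ _) hle, by simp⟩
    · push_neg at hle
      have hVC : Vl <+: C :=
        List.prefix_of_prefix_length_le (List.prefix_append _ _) hCVS hle.le
      obtain ⟨C₁, rfl⟩ := hVC
      have hVlS : Vl <+: S := (List.prefix_append Vl C₁).trans hCS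
      obtain ⟨S₁, rfl⟩ := hVlS
      have hC₁S₁ : C₁ <+: S₁ := (List.prefix_append_right_inj Vl).mp hCS
      have hC₁S : C₁ <+: Vl ++ S₁ := (List.prefix_append_right_inj Vl).mp hCVS
      have hlen' : C₁.length ≤ n := by
        have h1 : 1 ≤ Vl.length := List.length_pos_iff.mpr hne
        have := hlen
        rw [List.length_append] at this
        omega
      obtain ⟨N, W', hW', hC⟩ := ih C₁ S₁ hlen' hC₁S₁ hC₁S
      exact ⟨N + 1, W', hW', by simp [hC, List.replicate_succ]⟩

/-- Part (1) of the cancelling-paths lemma: with `V` an immersed closed path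
at `P` with distinct initial and terminal directions, `W` a nontrivial initial
subpath of `V` ending at `Q`, `V' = [W⁻¹VW]`, and `X`, `Y` immersed paths
starting at `P` and `Q` with `WY` immersed, the maximal common initial subpath
of `X`, `WY` and `[WV'Y]` has the form `Vᴺ W'` for an initial subpath `W'` of
`V`. -/
theorem stmt12 {Vt E : Type*} (G : GraphData Vt E) (P Q : Vt)
    (V W X Y : List E) (e₀ eL : E)
    (hV : G.IsReducedPath V)
    (hV0 : V.head? = some e₀) (hVL : V.getLast? = some eL)
    (hVstart : G.init e₀ = P) (hVend : G.term eL = P)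
    (hdir : e₀ ≠ G.bar eL)
    (hW : W ≠ []) (hWV : W <+: V) (hWQ : G.EndsAt W Q)
    (V' : List E) (hV' : G.Tightening (G.reversePath W ++ V ++ W) V')
    (hX : G.IsReducedPath X) (hXstart : X = [] ∨ G.StartsAt X P)
    (hY : Y = [] ∨ G.StartsAt Y Q)
    (hWY : G.IsReducedPath (W ++ Y))
    (Z : List E) (hZ : G.Tightening (W ++ V' ++ Y) Z)
    (C : List E) (hCX : C <+: X) (hCWY : C <+: W ++ Y) (hCZ : C <+: Z)
    (hmax : ∀ C', C' <+: X → C' <+: W ++ Y → C' <+: Z → C'.length ≤ C.length) :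
    ∃ (N : ℕ) (W' : List E), W' <+: V ∧
      C = (List.replicate N V).flatten ++ W' := by
  obtain ⟨U, hU⟩ := hWV
  have hVne : V ≠ [] := by intro h; rw [h] at hV0; simp at hV0
  have hWYhead : (W ++ Y).head? = some e₀ := by
    rw [List.head?_append_of_ne_nil _ hW]
    rw [← hU, List.head?_append_of_ne_nil _ hW] at hV0
    exact hV0
  have hR1 : G.term eL = G.init e₀ := by rw [hVend, hVstart]
  have hUW : G.IsReducedPath (U ++ W) := by
    constructor
    · exact chain_rot (by rw [hU]; exact hV.1) hW (by rw [hU]; exact hV0)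
        (by rw [hU]; exact hVL) hR1
    · exact chain_rot (by rw [hU]; exact hV.2) hW (by rw [hU]; exact hV0)
        (by rw [hU]; exact hVL) hdir
  have hV'eq : V' = U ++ W := by
    refine G.tight_unique hV' ⟨?_, hUW⟩
    have heq : G.reversePath W ++ V ++ W = G.reversePath W ++ (W ++ (U ++ W)) := by
      rw [← hU]; simp [List.append_assoc]
    rw [heq]
    exact G.revcancel W (U ++ W)
  have hZfull : G.IsReducedPath (V ++ (W ++ Y)) := by
    constructor
    · exact chain_glue hV.1 hWY.1 hVL hWYhead hR1
    · exact chain_glue hV.2 hWY.2 hVL hWYhead hdir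
  have hZeq : Z = V ++ (W ++ Y) := by
    refine G.tight_unique hZ ⟨?_, hZfull⟩
    have heq : W ++ V' ++ Y = V ++ (W ++ Y) := by
      rw [hV'eq, ← hU]; simp [List.append_assoc]
    rw [heq]
  rw [hZeq] at hCZ
  exact key_prefix V hVne C.length C (W ++ Y) le_rfl hCWY hCZ
end

section
/- Let G be a finite connected metric graph with a train track structure (at least two gates at every vertex). Then G contains a legal candidate loop: a legal loop that is either embedded, a figure 8, or a dumbbell. In particular, G contains a legal loop that crosses each edge at most twice and crosses some edge exactly once. -/
namespace GraphData

variable {V E : Type*} (G : GraphData V E)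

/-- An embedded loop: a cyclically reduced closed path visiting no vertex
twice. -/
def IsEmbeddedLoop (p : List E) : Prop :=
  G.IsLoop p ∧ G.IsCyclicallyReduced p ∧ (p.map G.init).Nodup

/-- A figure eight: two embedded loops based at a common vertex `v` and
meeting only at `v`, traversed in succession. -/
def IsFigureEight (p : List E) : Prop :=
  ∃ (v : V) (p₁ p₂ : List E), p = p₁ ++ p₂ ∧
    G.IsEmbeddedLoop p₁ ∧ G.IsEmbeddedLoop p₂ ∧
    G.IsLoopAt p₁ v ∧ G.IsLoopAt p₂ v ∧
    ∀ w, w ∈ p₁.map G.init → w ∈ p₂.map G.init → w = v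

/-- A dumbbell: two disjoint embedded loops joined by an embedded arc, the
loop traversing the first circle, the arc, the second circle, and the arc in
reverse. -/
def IsDumbbell (p : List E) : Prop :=
  ∃ (u v : V) (c₁ a c₂ : List E),
    p = c₁ ++ a ++ c₂ ++ G.reversePath a ∧
    G.IsEmbeddedLoop c₁ ∧ G.IsEmbeddedLoop c₂ ∧
    G.IsLoopAt c₁ u ∧ G.IsLoopAt c₂ v ∧ u ≠ v ∧
    a ≠ [] ∧ G.IsReducedPath a ∧ (a.map G.init).Nodup ∧
    G.StartsAt a u ∧ G.EndsAt a v ∧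
    (∀ w, w ∈ c₁.map G.init → w ∈ c₂.map G.init → False) ∧
    (∀ w, w ∈ a.map G.init → w ∈ c₁.map G.init → w = u) ∧
    (∀ w, w ∈ a.map G.init → w ∈ c₂.map G.init → False)

/-- A candidate loop: embedded, a figure eight, or a dumbbell. -/
def IsCandidate (p : List E) : Prop :=
  G.IsEmbeddedLoop p ∨ G.IsFigureEight p ∨ G.IsDumbbell p

end GraphData

namespace GraphData

variable {V E : Type*} (G : GraphData V E)

/-- A legal loop with respect to a gate relation `rel`: a nontrivial closed
reduced path all of whose turns (including the wrap-around turn) are legal. -/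
def IsLegalLoop (rel : E → E → Prop) (p : List E) : Prop :=
  G.IsLoop p ∧
  List.Chain' (fun e f => ¬ rel (G.bar e) f) p ∧
  ∀ e f, p.getLast? = some e → p.head? = some f → ¬ rel (G.bar e) f

end GraphData

namespace CandSeg
open List
variable {α β : Type*} (s : ℕ → α)

def seg (a b : ℕ) : List α := (List.range (b - a)).map (fun t => s (a + t))

theorem length_seg (a b) : (seg s a b).length = b - a := by simp [seg]

theorem seg_ne_nil {a b} (h : a < b) : seg s a b ≠ [] := by
  intro hc
  have := congrArg List.length hc
  simp [seg] at this
  omega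

theorem head?_seg {a b} (h : a < b) : (seg s a b).head? = some (s a) := by
  obtain ⟨n, hn⟩ : ∃ n, b - a = n + 1 := ⟨b - a - 1, by omega⟩
  simp [seg, hn, range_succ_eq_map]

theorem seg_concat {a b} (h : a < b) : seg s a b = seg s a (b-1) ++ [s (b-1)] := by
  show (range (b - a)).map _ = (range (b - 1 - a)).map _ ++ [s (b-1)]
  have hn : b - a = (b - 1 - a) + 1 := by omega
  rw [hn, range_succ, map_append]
  simp only [map_cons, map_nil]
  congr 3
  omega

theorem getLast?_seg {a b} (h : a < b) : (seg s a b).getLast? = some (s (b-1)) := by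
  rw [seg_concat s h]; exact getLast?_concat

theorem mem_seg {a b} {e : α} : e ∈ seg s a b ↔ ∃ t, a ≤ t ∧ t < b ∧ s t = e := by
  simp only [seg, mem_map, mem_range]
  constructor
  · rintro ⟨t, ht, rfl⟩; exact ⟨a + t, by omega, by omega, rfl⟩
  · rintro ⟨t, h1, h2, rfl⟩
    exact ⟨t - a, by omega, by congr 1; omega⟩

theorem chain'_seg {a b} {R : α → α → Prop}
    (h : ∀ t, a ≤ t → t + 1 < b → R (s t) (s (t+1))) : Chain' R (seg s a b) := by
  show List.IsChain _ _
  rw [seg, isChain_map]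
  rcases hn : b - a with _ | n
  · simp
  · rw [isChain_range_succ]
    intro u hu
    have : a + u + 1 < b := by omega
    exact h (a + u) (by omega) this

theorem nodup_seg_map {a b} (f : α → β)
    (hinj : ∀ t u, a ≤ t → t < u → u < b → f (s t) ≠ f (s u)) :
    ((seg s a b).map f).Nodup := by
  rw [seg, map_map]
  refine Nodup.map_on ?_ nodup_range
  intro x hx y hy hxy
  rw [mem_range] at hx hy
  rcases lt_trichotomy x y with h | h | h
  · exact absurd hxy (hinj _ _ (Nat.le_add_right _ _) (by omega) (by omega))
  · exact h
  · exact absurd hxy.symm (hinj _ _ (Nat.le_add_right _ _) (by omega) (by omega))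

theorem nodup_seg {a b}
    (hinj : ∀ t u, a ≤ t → t < u → u < b → s t ≠ s u) : (seg s a b).Nodup := by
  have := nodup_seg_map s id hinj
  simpa using this

theorem seg_append {a b c} (hab : a ≤ b) (hbc : b ≤ c) :
    seg s a b ++ seg s b c = seg s a c := by
  show (range (b-a)).map _ ++ (range (c-b)).map _ = (range (c-a)).map _
  have : c - a = (b - a) + (c - b) := by omega
  rw [this, range_add, map_append, map_map]
  congr 1
  refine List.map_congr_left ?_
  intro x _
  simp only [Function.comp_apply]
  congr 1
  omega

theorem count_seg_eq_zero [DecidableEq α] {a b} {e : α}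
    (h : ∀ t, a ≤ t → t < b → s t ≠ e) : (seg s a b).count e = 0 := by
  rw [count_eq_zero]
  rw [mem_seg]
  rintro ⟨t, h1, h2, h3⟩
  exact h t h1 h2 h3

theorem count_seg_pos [DecidableEq α] {a b} {t : ℕ} (h1 : a ≤ t) (h2 : t < b) :
    1 ≤ (seg s a b).count (s t) := by
  rw [Nat.one_le_iff_ne_zero, Ne, count_eq_zero]
  rw [mem_seg]
  push_neg
  exact ⟨t, h1, h2, rfl⟩

end CandSeg


section CandAux
open List CandSeg

variable {V E : Type*} (G : GraphData V E) (rel : E → E → Prop)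

theorem mem_of_getLast?' {α : Type*} {l : List α} {a : α} (h : l.getLast? = some a) : a ∈ l := by
  have := List.mem_of_mem_head? (l := l.reverse) (a := a) (by rwa [head?_reverse])
  exact (mem_reverse).mp this

theorem mem_of_head?' {α : Type*} {l : List α} {a : α} (h : l.head? = some a) : a ∈ l :=
  List.mem_of_mem_head? (by rw [h]; exact rfl)

theorem reduced_of_legal (hrefl : ∀ e, rel e e) {p : List E}
    (h : List.Chain' (fun e f => ¬ rel (G.bar e) f) p) :
    List.Chain' (fun e f => f ≠ G.bar e) p :=
  h.imp (fun a b hab hba => absurd (by rw [hba]; exact hrefl _) hab)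

theorem cyc_red (hrefl : ∀ e, rel e e) {p : List E}
    (hpath : G.IsEdgePath p)
    (hleg : List.Chain' (fun e f => ¬ rel (G.bar e) f) p)
    (hnd : (p.map G.init).Nodup) : G.IsCyclicallyReduced p := by
  intro e f he hf heq
  rcases p with _ | ⟨x, q⟩
  · simp at he
  have hex : x = e := by simpa using he
  subst hex
  rcases q with _ | ⟨y, t⟩
  · have hfx : x = f := by simpa using hf
    subst hfx
    exact G.bar_ne x heq.symm
  rcases t with _ | ⟨z, t⟩
  · have hfy : y = f := by
      simpa [getLast?_cons_cons, getLast?_singleton] using hf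
    subst hfy
    have hx : ¬ rel (G.bar x) y := (List.isChain_pair.mp hleg)
    rw [heq, G.bar_bar] at hx
    exact hx (hrefl _)
  · have hft : f ∈ z :: t := by
      rw [getLast?_cons_cons, getLast?_cons_cons] at hf
      exact mem_of_getLast?' hf
    have hterm : G.term x = G.init y := (List.isChain_cons_cons.mp hpath).1
    have hfy : G.init f = G.init y := by
      have h2 : G.term (G.bar f) = G.init y := heq ▸ hterm
      rwa [GraphData.term, G.bar_bar] at h2
    have hf_mem : f ∈ x :: y :: z :: t := by
      simp only [mem_cons] at hft ⊢; tauto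
    have hy_mem : y ∈ x :: y :: z :: t := by simp
    have hfy2 : f = y := inj_on_of_nodup_map hnd hf_mem hy_mem hfy
    subst hfy2
    have hndp : (x :: f :: z :: t).Nodup := hnd.of_map _
    rw [nodup_cons, nodup_cons] at hndp
    exact hndp.2.1 hft

theorem embedded_count [DecidableEq E] (hrefl : ∀ e, rel e e) {p : List E}
    (hpath : G.IsEdgePath p)
    (hleg : List.Chain' (fun e f => ¬ rel (G.bar e) f) p)
    (hnd : (p.map G.init).Nodup)
    (hclosed : ∀ e f, p.getLast? = some e → p.head? = some f → G.term e = G.init f)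
    (e : E) : p.count e + p.count (G.bar e) ≤ 1 := by
  have hndp : p.Nodup := hnd.of_map _
  have hc1 : ∀ x : E, p.count x ≤ 1 := List.nodup_iff_count_le_one.mp hndp
  by_cases he : e ∈ p
  · suffices hbe : G.bar e ∉ p by
      have := hc1 e
      have h0 : p.count (G.bar e) = 0 := List.count_eq_zero.mpr hbe
      omega
    intro hbe
    obtain ⟨l₁, l₂, hp⟩ := List.append_of_mem he
    rcases l₂ with _ | ⟨g, l₂⟩
    · -- e is the last edge
      have hlast : p.getLast? = some e := by rw [hp]; exact getLast?_concat
      have hne : p ≠ [] := by intro h; rw [h] at he; exact absurd he (List.not_mem_nil)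
      obtain ⟨f, hf⟩ : ∃ f, p.head? = some f := by
        cases hh : p.head? with
        | none => exact absurd (List.head?_eq_none_iff.mp hh) hne
        | some f => exact ⟨f, rfl⟩
      have hterm : G.term e = G.init f := hclosed e f hlast hf
      have hfmem : f ∈ p := mem_of_head?' hf
      have hini : G.init (G.bar e) = G.init f := hterm
      have hbf : G.bar e = f := inj_on_of_nodup_map hnd hbe hfmem hini
      have hcr := cyc_red G rel hrefl hpath hleg hnd f e hf hlast
      exact hcr hbf.symm
    · -- e has a successor g
      have h1 : G.term e = G.init g := by
        have := (List.isChain_append.mp (hp ▸ hpath)).2.1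
        exact (List.isChain_cons_cons.mp this).1
      have h2 : ¬ rel (G.bar e) g := by
        have := (List.isChain_append.mp (hp ▸ hleg)).2.1
        exact (List.isChain_cons_cons.mp this).1
      have hgmem : g ∈ p := by rw [hp]; simp
      have hini : G.init (G.bar e) = G.init g := h1
      have hbg : G.bar e = g := inj_on_of_nodup_map hnd hbe hgmem hini
      rw [← hbg] at h2
      exact h2 (hrefl _)
  · have h0 : p.count e = 0 := List.count_eq_zero.mpr he
    have := hc1 (G.bar e)
    omega

theorem rev_head? (q : List E) : (G.reversePath q).head? = q.getLast?.map G.bar := by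
  rw [GraphData.reversePath, head?_reverse, getLast?_map]

theorem rev_getLast? (q : List E) : (G.reversePath q).getLast? = q.head?.map G.bar := by
  rw [GraphData.reversePath, getLast?_reverse, head?_map]

theorem rev_chain' {R : E → E → Prop} {q : List E} :
    List.Chain' R (G.reversePath q) ↔ List.Chain' (fun e f => R (G.bar f) (G.bar e)) q := by
  show List.IsChain _ _ ↔ List.IsChain _ _
  rw [GraphData.reversePath, List.isChain_reverse, List.isChain_map]

theorem rev_map_init (q : List E) :
    (G.reversePath q).map G.init = (q.map G.term).reverse := by
  rw [GraphData.reversePath, List.map_reverse, List.map_map]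
  rfl

theorem bar_injective : Function.Injective G.bar := fun a b h => by
  rw [← G.bar_bar a, h, G.bar_bar]

theorem rev_count [DecidableEq E] (q : List E) (e : E) :
    (G.reversePath q).count e = q.count (G.bar e) := by
  rw [GraphData.reversePath, count_reverse]
  conv_lhs => rw [← G.bar_bar e]
  exact List.count_map_of_injective q G.bar (bar_injective G) (G.bar e)

theorem rev_ne_nil {q : List E} (h : q ≠ []) : G.reversePath q ≠ [] := by
  rw [GraphData.reversePath]
  simp [h]

theorem embedded_package [DecidableEq E] (hrefl : ∀ e, rel e e) {p : List E}
    (hpath : G.IsEdgePath p)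
    (hleg : List.Chain' (fun e f => ¬ rel (G.bar e) f) p)
    (hne : p ≠ [])
    (hnd : (p.map G.init).Nodup)
    (hclosed : ∀ e f, p.getLast? = some e → p.head? = some f → G.term e = G.init f)
    (hwrap : ∀ e f, p.getLast? = some e → p.head? = some f → ¬ rel (G.bar e) f) :
    G.IsLegalLoop rel p ∧ G.IsCandidate p ∧
      (∀ e, G.crossings p e ≤ 2) ∧ ∃ e, G.crossings p e = 1 := by
  obtain ⟨f, hf⟩ : ∃ f, p.head? = some f := by
    cases hh : p.head? with
    | none => exact absurd (List.head?_eq_none_iff.mp hh) hne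
    | some f => exact ⟨f, rfl⟩
  obtain ⟨l, hl⟩ : ∃ l, p.getLast? = some l := by
    cases hh : p.getLast? with
    | none => exact absurd (List.getLast?_eq_none_iff.mp hh) hne
    | some l => exact ⟨l, rfl⟩
  have hloopat : G.IsLoopAt p (G.init f) :=
    ⟨⟨hpath, reduced_of_legal G rel hrefl hleg⟩, hne, ⟨f, hf, rfl⟩, ⟨l, hl, hclosed l f hl hf⟩⟩
  have hloop : G.IsLoop p := ⟨_, hloopat⟩
  have hcyc := cyc_red G rel hrefl hpath hleg hnd
  have hcount := embedded_count G rel hrefl hpath hleg hnd hclosed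
  refine ⟨⟨hloop, hleg, hwrap⟩, Or.inl ⟨hloop, hcyc, hnd⟩,
    fun e => le_trans (hcount e) one_le_two, f, ?_⟩
  have hfm : f ∈ p := mem_of_head?' hf
  have h1 : 0 < p.count f := List.count_pos_iff.mpr hfm
  have h2 := hcount f
  show p.count f + p.count (G.bar f) = 1
  omega

theorem chain'_append' {α : Type*} {R : α → α → Prop} {l₁ l₂ : List α} {x y : α}
    (h1 : List.Chain' R l₁) (h2 : List.Chain' R l₂)
    (hx : l₁.getLast? = some x) (hy : l₂.head? = some y) (hxy : R x y) :
    List.Chain' R (l₁ ++ l₂) := by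
  show List.IsChain _ _
  rw [isChain_append]
  refine ⟨h1, h2, ?_⟩
  intro a ha b hb
  rw [hx] at ha; rw [hy] at hb
  obtain rfl : x = a := by simpa using ha
  obtain rfl : y = b := by simpa using hb
  exact hxy

theorem head?_append' {α : Type*} {l₁ l₂ : List α} {x : α} (h : l₁.head? = some x) :
    (l₁ ++ l₂).head? = some x := by rw [head?_append, h]; rfl

theorem getLast?_append' {α : Type*} {l₁ l₂ : List α} {x : α} (h : l₂.getLast? = some x) :
    (l₁ ++ l₂).getLast? = some x := by rw [getLast?_append, h]; rfl

theorem append_ne_nil' {α : Type*} {l₁ l₂ : List α} (h : l₁ ≠ []) : l₁ ++ l₂ ≠ [] := by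
  simp [h]

end CandAux

/-- A finite connected metric graph with a train track structure (an
equivalence relation "gates" on directions with at least two gates at every
vertex) contains a legal candidate loop; in particular a legal loop crossing
each edge at most twice and some edge exactly once. -/
theorem stmt13 {V E : Type*} [Fintype V] [Fintype E] [DecidableEq E] [Nonempty E]
    (G : GraphData V E) (ℓ : E → ℝ)
    (hpos : ∀ e, 0 < ℓ e) (hsym : ∀ e, ℓ (G.bar e) = ℓ e)
    (hconn : ∀ e f : E, ∃ p, G.IsEdgePath p ∧
      (p.head? = some e ∨ p.head? = some (G.bar e)) ∧
      (p.getLast? = some f ∨ p.getLast? = some (G.bar f)))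
    (rel : E → E → Prop)
    (hrefl : ∀ e, rel e e)
    (hsymm : ∀ e f, rel e f → rel f e)
    (htrans : ∀ e f g, rel e f → rel f g → rel e g)
    (hvert : ∀ e f, rel e f → G.init e = G.init f)
    (hgates : ∀ v : V, ∃ e f, G.init e = v ∧ G.init f = v ∧ ¬ rel e f) :
    ∃ p : List E, G.IsLegalLoop rel p ∧ G.IsCandidate p ∧
      (∀ e, G.crossings p e ≤ 2) ∧ ∃ e, G.crossings p e = 1 := by
  classical
  open List CandSeg in
  clear hconn hpos hsym
  -- choose a legal continuation of every edge
  have hnext : ∀ e : E, ∃ f, G.term e = G.init f ∧ ¬ rel (G.bar e) f := by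
    intro e
    obtain ⟨e₁, e₂, h1, h2, h12⟩ := hgates (G.term e)
    by_cases h : rel (G.bar e) e₁
    · exact ⟨e₂, h2.symm, fun hc => h12 (htrans _ _ _ (hsymm _ _ h) hc)⟩
    · exact ⟨e₁, h1.symm, h⟩
  choose nxt hnxt1 hnxt2 using hnext
  obtain ⟨e₀⟩ := (inferInstance : Nonempty E)
  set s : ℕ → E := fun n => nxt^[n] e₀ with hs
  have hsucc : ∀ n, s (n+1) = nxt (s n) := by
    intro n; simp only [hs]; rw [Function.iterate_succ_apply']
  have hstep : ∀ n, G.term (s n) = G.init (s (n+1)) := fun n => by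
    rw [hsucc]; exact hnxt1 _
  have hlegstep : ∀ n, ¬ rel (G.bar (s n)) (s (n+1)) := fun n => by
    rw [hsucc]; exact hnxt2 _
  clear_value s
  clear hs
  have hstep' : ∀ t, 0 < t → G.term (s (t-1)) = G.init (s t) := by
    intro t ht; have := hstep (t-1); rwa [Nat.sub_add_cancel ht] at this
  have hls : ∀ t, 0 < t → ¬ rel (G.bar (s (t-1))) (s t) := by
    intro t ht; have := hlegstep (t-1); rwa [Nat.sub_add_cancel ht] at this
  have hnotbar : ∀ t, s (t+1) ≠ G.bar (s t) := by
    intro t hc; exact hlegstep t (by rw [hc]; exact hrefl _)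
  -- pigeonhole: first repeated vertex, then second event
  have master : ∃ i j m : ℕ, i < j ∧ j < m ∧
      G.init (s i) = G.init (s j) ∧
      (∃ k₀, i ≤ k₀ ∧ k₀ < m ∧ G.init (s k₀) = G.init (s m)) ∧
      (∀ t t', i ≤ t → t < t' → t' < m → G.init (s t) = G.init (s t') →
        t = i ∧ t' = j) := by
    have hex : ∃ j, ∃ i, i < j ∧ G.init (s i) = G.init (s j) := by
      obtain ⟨a, b, hab, h⟩ := Finite.exists_ne_map_eq_of_infinite (fun n => G.init (s n))
      rcases Nat.lt_or_ge a b with hl | hl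
      · exact ⟨b, a, hl, h⟩
      · exact ⟨a, b, Nat.lt_of_le_of_ne hl (Ne.symm hab), h.symm⟩
    obtain ⟨i, hij, hvij⟩ := Nat.find_spec hex
    set j := Nat.find hex with hjdef
    have hjmin : ∀ j', j' < j → ¬ ∃ i', i' < j' ∧ G.init (s i') = G.init (s j') :=
      fun j' h => Nat.find_min hex h
    have hex2 : ∃ m, j < m ∧ ∃ k, i ≤ k ∧ k < m ∧ G.init (s k) = G.init (s m) := by
      obtain ⟨a, b, hab, h⟩ :=
        Finite.exists_ne_map_eq_of_infinite (fun n => G.init (s (j+1+n)))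
      rcases Nat.lt_or_ge a b with hl | hl
      · exact ⟨j+1+b, by omega, j+1+a, by omega, by omega, h⟩
      · exact ⟨j+1+a, by omega, j+1+b, by omega, by omega, h.symm⟩
    obtain ⟨hjm, k₀, hik, hkm, hvkm⟩ := Nat.find_spec hex2
    set m := Nat.find hex2 with hmdef
    have hmmin : ∀ m', m' < m →
        ¬ (j < m' ∧ ∃ k, i ≤ k ∧ k < m' ∧ G.init (s k) = G.init (s m')) :=
      fun m' h => Nat.find_min hex2 h
    refine ⟨i, j, m, hij, hjm, hvij, ⟨k₀, hik, hkm, hvkm⟩, ?_⟩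
    intro t t' ht htt ht'm heq
    rcases lt_trichotomy t' j with h | h | h
    · exact absurd ⟨t, htt, heq⟩ (hjmin t' h)
    · subst h
      refine ⟨?_, rfl⟩
      by_contra hti
      rcases lt_trichotomy t i with h2 | h2 | h2
      · exact hjmin i hij ⟨t, h2, heq.trans hvij.symm⟩
      · exact hti h2
      · exact hjmin t htt ⟨i, h2, hvij.trans heq.symm⟩
    · exact absurd ⟨h, t, ht, htt, heq⟩ (hmmin t' ht'm)
  obtain ⟨i, j, m, hij, hjm, hvij, ⟨k₀, hik, hkm, hvkm⟩, hInj⟩ := master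
  have h0j : 0 < j := by omega
  have h0m : 0 < m := by omega
  -- generic facts about the sequence on [i, m)
  have hbar_succ : ∀ t t', i ≤ t → t < t' → t' < m → s t' ≠ G.bar (s t) := by
    intro t t' ht htt ht' hc
    have hv : G.init (s (t+1)) = G.init (s t') := by
      rw [hc]; exact (hstep t).symm
    rcases Nat.lt_or_ge (t+1) t' with h | h
    · obtain ⟨h1, h2⟩ := hInj (t+1) t' (by omega) h ht' hv
      omega
    · have ht1 : t' = t + 1 := by omega
      rw [ht1] at hc
      exact hnotbar t hc
  have segpath : ∀ a b : ℕ, G.IsEdgePath (seg s a b) := fun a b =>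
    chain'_seg s (fun t _ _ => hstep t)
  have segleg : ∀ a b : ℕ,
      List.Chain' (fun e f => ¬ rel (G.bar e) f) (seg s a b) := fun a b =>
    chain'_seg s (fun t _ _ => hlegstep t)
  have segnd : ∀ a b : ℕ, i ≤ a → b ≤ m → (b ≤ j ∨ i < a) →
      ((seg s a b).map G.init).Nodup := by
    intro a b ha hb hc
    refine nodup_seg_map s G.init ?_
    intro t u ht htu hub heq
    obtain ⟨h1, h2⟩ := hInj t u (by omega) htu (by omega) heq
    omega
  have hloopat : ∀ a b : ℕ, a < b → G.term (s (b-1)) = G.init (s a) →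
      G.IsLoopAt (seg s a b) (G.init (s a)) := by
    intro a b hab hcl
    exact ⟨⟨segpath a b, reduced_of_legal G rel hrefl (segleg a b)⟩, seg_ne_nil s hab,
      ⟨s a, head?_seg s hab, rfl⟩, ⟨s (b-1), getLast?_seg s hab, hcl⟩⟩
  have hembed : ∀ a b : ℕ, a < b → G.term (s (b-1)) = G.init (s a) →
      ((seg s a b).map G.init).Nodup → G.IsEmbeddedLoop (seg s a b) := by
    intro a b hab hcl hnd
    exact ⟨⟨_, hloopat a b hab hcl⟩,
      cyc_red G rel hrefl (segpath a b) (segleg a b) hnd, hnd⟩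
  have hclγ : G.term (s (j-1)) = G.init (s i) := (hstep' j h0j).trans hvij.symm
  by_cases hw1 : rel (G.bar (s (j-1))) (s i)
  swap
  · -- Case 0 : the embedded loop seg s i j closes up legally
    refine ⟨seg s i j, embedded_package G rel hrefl (segpath i j) (segleg i j)
      (seg_ne_nil s hij) (segnd i j le_rfl (by omega) (Or.inl le_rfl)) ?_ ?_⟩
    · intro e f hel hef
      rw [getLast?_seg s hij] at hel
      rw [head?_seg s hij] at hef
      obtain rfl : s (j-1) = e := by simpa using hel
      obtain rfl : s i = f := by simpa using hef
      exact hclγ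
    · intro e f hel hef
      rw [getLast?_seg s hij] at hel
      rw [head?_seg s hij] at hef
      obtain rfl : s (j-1) = e := by simpa using hel
      obtain rfl : s i = f := by simpa using hef
      exact hw1
  -- now the closing turn of the first loop is illegal
  have hnij : ¬ rel (s i) (s j) := fun hc => hls j h0j (htrans _ _ _ hw1 hc)
  have hsij : ∀ t t', i ≤ t → t < t' → t' < m → s t ≠ s t' := by
    intro t t' ht htt ht' hc
    obtain ⟨h1, h2⟩ := hInj t t' ht htt ht' (by rw [hc])
    subst h1; subst h2
    exact hls _ h0j (hc ▸ hw1)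
  have harc : ∀ a b : ℕ, i ≤ a → b ≤ m → ∀ e : E,
      (seg s a b).count e + (seg s a b).count (G.bar e) ≤ 1 := by
    intro a b ha hb e
    have hnd : (seg s a b).Nodup :=
      nodup_seg s (fun t u ht htu hub => hsij t u (by omega) htu (by omega))
    have h1 := List.nodup_iff_count_le_one.mp hnd e
    have h2 := List.nodup_iff_count_le_one.mp hnd (G.bar e)
    by_cases he : e ∈ seg s a b
    · obtain ⟨t, ht1, ht2, hte⟩ := (mem_seg s).mp he
      have hbe : G.bar e ∉ seg s a b := by
        intro hbe
        obtain ⟨t', h1', h2', hte'⟩ := (mem_seg s).mp hbe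
        rcases lt_trichotomy t t' with h | h | h
        · refine hbar_succ t t' (by omega) h (by omega) ?_
          rw [hte', hte]
        · rw [h] at hte
          rw [hte] at hte'
          exact G.bar_ne _ hte'.symm
        · refine hbar_succ t' t (by omega) h (by omega) ?_
          rw [hte', G.bar_bar]; exact hte
      have h0 : (seg s a b).count (G.bar e) = 0 := List.count_eq_zero.mpr hbe
      omega
    · have h0 : (seg s a b).count e = 0 := List.count_eq_zero.mpr he
      omega
  have hcount0 : ∀ t c d : ℕ, i ≤ t → t < c → d ≤ m →
      (seg s c d).count (s t) = 0 ∧ (seg s c d).count (G.bar (s t)) = 0 := by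
    intro t c d ht htc hdm
    constructor <;> refine count_seg_eq_zero s ?_ <;> intro t' h1 h2 hc
    · exact hsij t t' ht (by omega) (by omega) hc.symm
    · exact hbar_succ t t' ht (by omega) (by omega) hc
  by_cases hA : G.init (s m) = G.init (s i)
  · -- the second landing point is the original base vertex u
    by_cases hA1 : rel (G.bar (s (m-1))) (s j)
    · -- figure eight  seg s i j ++ seg s j m
      have hA2 : ¬ rel (G.bar (s (m-1))) (s i) := by
        intro hc
        exact hnij (htrans _ _ _ (hsymm _ _ hc) hA1)
      have hclδ : G.term (s (m-1)) = G.init (s j) :=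
        (hstep' m h0m).trans (hA.trans hvij)
      have hndγ : ((seg s i j).map G.init).Nodup :=
        segnd i j le_rfl (by omega) (Or.inl le_rfl)
      have hndδ : ((seg s j m).map G.init).Nodup :=
        segnd j m (by omega) le_rfl (Or.inr hij)
      have hlastδ : (seg s i j ++ seg s j m).getLast? = some (s (m-1)) :=
        getLast?_append' (getLast?_seg s hjm)
      have hheadγ : (seg s i j ++ seg s j m).head? = some (s i) :=
        head?_append' (head?_seg s hij)
      have hpath : G.IsEdgePath (seg s i j ++ seg s j m) :=
        chain'_append' (segpath i j) (segpath j m) (getLast?_seg s hij)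
          (head?_seg s hjm) (hstep' j h0j)
      have hlegp : List.Chain' (fun e f => ¬ rel (G.bar e) f) (seg s i j ++ seg s j m) :=
        chain'_append' (segleg i j) (segleg j m) (getLast?_seg s hij)
          (head?_seg s hjm) (hls j h0j)
      have hloop : G.IsLoop (seg s i j ++ seg s j m) := by
        refine ⟨G.init (s i), ⟨hpath, reduced_of_legal G rel hrefl hlegp⟩,
          append_ne_nil' (seg_ne_nil s hij), ⟨s i, hheadγ, rfl⟩,
          ⟨s (m-1), hlastδ, (hstep' m h0m).trans hA⟩⟩
      refine ⟨seg s i j ++ seg s j m, ⟨hloop, hlegp, ?_⟩, Or.inr (Or.inl ?_), ?_, ?_⟩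
      · intro e f hel hef
        rw [hlastδ] at hel; rw [hheadγ] at hef
        obtain rfl : s (m-1) = e := by simpa using hel
        obtain rfl : s i = f := by simpa using hef
        exact hA2
      · -- figure eight structure
        refine ⟨G.init (s i), seg s i j, seg s j m, rfl,
          hembed i j hij hclγ hndγ, hembed j m hjm hclδ hndδ,
          hloopat i j hij hclγ, ?_, ?_⟩
        · have := hloopat j m hjm hclδ
          rwa [← hvij] at this
        · intro w hw1' hw2'
          simp only [List.mem_map] at hw1' hw2'
          obtain ⟨x, hx, rfl⟩ := hw1'
          obtain ⟨y, hy, hyx⟩ := hw2'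
          obtain ⟨t, ht1, ht2, rfl⟩ := (mem_seg s).mp hx
          obtain ⟨t', h1', h2', rfl⟩ := (mem_seg s).mp hy
          obtain ⟨rfl, -⟩ := hInj t t' ht1 (by omega) h2' hyx.symm
          rfl
      · intro e
        show (seg s i j ++ seg s j m).count e + (seg s i j ++ seg s j m).count (G.bar e) ≤ 2
        rw [seg_append s (by omega) (by omega)]
        exact le_trans (harc i m le_rfl le_rfl e) one_le_two
      · refine ⟨s i, ?_⟩
        show (seg s i j ++ seg s j m).count (s i) + (seg s i j ++ seg s j m).count (G.bar (s i)) = 1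
        rw [seg_append s (by omega) (by omega)]
        have h1 := count_seg_pos s (le_refl i) (show i < m by omega) (α := E)
        have h2 := harc i m le_rfl le_rfl (s i)
        omega
    · -- the second loop seg s j m is itself an embedded legal loop
      refine ⟨seg s j m, embedded_package G rel hrefl (segpath j m) (segleg j m)
        (seg_ne_nil s hjm) (segnd j m (by omega) le_rfl (Or.inr hij)) ?_ ?_⟩
      · intro e f hel hef
        rw [getLast?_seg s hjm] at hel
        rw [head?_seg s hjm] at hef
        obtain rfl : s (m-1) = e := by simpa using hel
        obtain rfl : s j = f := by simpa using hef
        exact (hstep' m h0m).trans (hA.trans hvij)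
      · intro e f hel hef
        rw [getLast?_seg s hjm] at hel
        rw [head?_seg s hjm] at hef
        obtain rfl : s (m-1) = e := by simpa using hel
        obtain rfl : s j = f := by simpa using hef
        exact hA1
  -- the landing vertex is a new vertex of the cycle or of the tail
  have hik0 : i < k₀ := by
    rcases Nat.lt_or_ge i k₀ with h | h
    · exact h
    · exfalso
      have : k₀ = i := by omega
      subst this
      exact hA hvkm.symm
  have hk0j : k₀ ≠ j := by
    intro h
    subst h
    exact hA (hvij.trans hvkm).symm
  have h0k0 : 0 < k₀ := by omega
  have hclc2 : G.term (s (m-1)) = G.init (s k₀) := (hstep' m h0m).trans hvkm.symm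
  have hmapterm : ∀ a b : ℕ, (seg s a b).map G.term = (seg s (a+1) (b+1)).map G.init := by
    intro a b
    rw [seg, seg, List.map_map, List.map_map]
    have hlen : b + 1 - (a+1) = b - a := by omega
    rw [hlen]
    refine List.map_congr_left ?_
    intro x _
    show G.term (s (a+x)) = G.init (s (a+1+x))
    rw [hstep (a+x)]
    have hx : a + x + 1 = a + 1 + x := by omega
    rw [hx]
  rcases Nat.lt_or_ge k₀ j with hBC | hBC
  · -- Case B : landing on the interior of the first cycle
    by_cases hB1 : rel (G.bar (s (m-1))) (s k₀)
    · -- go around the *reversed* beginning of the first cycle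
      set ra := G.reversePath (seg s i k₀) with hra
      have headra : ra.head? = some (G.bar (s (k₀-1))) := by
        rw [hra, rev_head?, getLast?_seg s hik0]; rfl
      have lastra : ra.getLast? = some (G.bar (s i)) := by
        rw [hra, rev_getLast?, head?_seg s hik0]; rfl
      have pathra : G.IsEdgePath ra := by
        rw [hra]
        refine (rev_chain' G).mpr (chain'_seg s ?_)
        intro t _ _
        show G.term (G.bar (s (t+1))) = G.init (G.bar (s t))
        rw [GraphData.term, G.bar_bar]
        exact (hstep t).symm
      have legra : List.Chain' (fun e f => ¬ rel (G.bar e) f) ra := by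
        rw [hra]
        refine (rev_chain' G).mpr (chain'_seg s ?_)
        intro t _ _
        show ¬ rel (G.bar (G.bar (s (t+1)))) (G.bar (s t))
        rw [G.bar_bar]
        exact fun hc => hlegstep t (hsymm _ _ hc)
      have hjunc : G.term (s (m-1)) = G.init (G.bar (s (k₀-1))) := by
        show G.term (s (m-1)) = G.term (s (k₀-1))
        exact hclc2.trans (hstep' k₀ h0k0).symm
      have hlegjunc : ¬ rel (G.bar (s (m-1))) (G.bar (s (k₀-1))) := by
        intro hc
        exact hls k₀ h0k0 (htrans _ _ _ (hsymm _ _ hc) hB1)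
      refine ⟨seg s j m ++ ra, embedded_package G rel hrefl
        (chain'_append' (segpath j m) pathra (getLast?_seg s hjm) headra hjunc)
        (chain'_append' (segleg j m) legra (getLast?_seg s hjm) headra hlegjunc)
        (append_ne_nil' (seg_ne_nil s hjm)) ?_ ?_ ?_⟩
      · rw [List.map_append]
        rw [hra, rev_map_init, hmapterm]
        refine List.nodup_append'.mpr ⟨segnd j m (by omega) le_rfl (Or.inr hij),
          List.nodup_reverse.mpr (segnd (i+1) (k₀+1) (by omega) (by omega) (Or.inr (by omega))), ?_⟩
        intro w hw1' hw2'
        rw [List.mem_reverse] at hw2'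
        simp only [List.mem_map] at hw1' hw2'
        obtain ⟨x, hx, rfl⟩ := hw1'
        obtain ⟨y, hy, hyx⟩ := hw2'
        obtain ⟨t, ht1, ht2, rfl⟩ := (mem_seg s).mp hx
        obtain ⟨r, hr1, hr2, rfl⟩ := (mem_seg s).mp hy
        obtain ⟨h1, -⟩ := hInj r t (by omega) (by omega) (by omega) hyx
        omega
      · intro e f hel hef
        rw [getLast?_append' lastra] at hel
        rw [head?_append' (head?_seg s hjm)] at hef
        obtain rfl : G.bar (s i) = e := by simpa using hel
        obtain rfl : s j = f := by simpa using hef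
        show G.init (G.bar (G.bar (s i))) = G.init (s j)
        rw [G.bar_bar]
        exact hvij
      · intro e f hel hef
        rw [getLast?_append' lastra] at hel
        rw [head?_append' (head?_seg s hjm)] at hef
        obtain rfl : G.bar (s i) = e := by simpa using hel
        obtain rfl : s j = f := by simpa using hef
        rw [G.bar_bar]
        exact hnij
    · -- continue around the end of the first cycle
      refine ⟨seg s j m ++ seg s k₀ j, embedded_package G rel hrefl
        (chain'_append' (segpath j m) (segpath k₀ j) (getLast?_seg s hjm)
          (head?_seg s hBC) hclc2)
        (chain'_append' (segleg j m) (segleg k₀ j) (getLast?_seg s hjm)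
          (head?_seg s hBC) hB1)
        (append_ne_nil' (seg_ne_nil s hjm)) ?_ ?_ ?_⟩
      · rw [List.map_append]
        refine List.nodup_append'.mpr ⟨segnd j m (by omega) le_rfl (Or.inr hij),
          segnd k₀ j (by omega) (by omega) (Or.inl le_rfl), ?_⟩
        intro w hw1' hw2'
        simp only [List.mem_map] at hw1' hw2'
        obtain ⟨x, hx, rfl⟩ := hw1'
        obtain ⟨y, hy, hyx⟩ := hw2'
        obtain ⟨t, ht1, ht2, rfl⟩ := (mem_seg s).mp hx
        obtain ⟨r, hr1, hr2, rfl⟩ := (mem_seg s).mp hy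
        obtain ⟨h1, -⟩ := hInj r t (by omega) (by omega) (by omega) hyx
        omega
      · intro e f hel hef
        rw [getLast?_append' (getLast?_seg s hBC)] at hel
        rw [head?_append' (head?_seg s hjm)] at hef
        obtain rfl : s (j-1) = e := by simpa using hel
        obtain rfl : s j = f := by simpa using hef
        exact hstep' j h0j
      · intro e f hel hef
        rw [getLast?_append' (getLast?_seg s hBC)] at hel
        rw [head?_append' (head?_seg s hjm)] at hef
        obtain rfl : s (j-1) = e := by simpa using hel
        obtain rfl : s j = f := by simpa using hef
        exact hls j h0j
  · -- Case C : landing on the tail : j < k₀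
    have hjk0 : j < k₀ := by omega
    by_cases hC1 : rel (G.bar (s (m-1))) (s k₀)
    · -- dumbbell
      have headra : (G.reversePath (seg s j k₀)).head? = some (G.bar (s (k₀-1))) := by
        rw [rev_head?, getLast?_seg s hjk0]; rfl
      have lastra : (G.reversePath (seg s j k₀)).getLast? = some (G.bar (s j)) := by
        rw [rev_getLast?, head?_seg s hjk0]; rfl
      have pathra : G.IsEdgePath (G.reversePath (seg s j k₀)) := by
        refine (rev_chain' G).mpr (chain'_seg s ?_)
        intro t _ _
        show G.term (G.bar (s (t+1))) = G.init (G.bar (s t))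
        rw [GraphData.term, G.bar_bar]
        exact (hstep t).symm
      have legra : List.Chain' (fun e f => ¬ rel (G.bar e) f) (G.reversePath (seg s j k₀)) := by
        refine (rev_chain' G).mpr (chain'_seg s ?_)
        intro t _ _
        show ¬ rel (G.bar (G.bar (s (t+1)))) (G.bar (s t))
        rw [G.bar_bar]
        exact fun hc => hlegstep t (hsymm _ _ hc)
      have hndγ : ((seg s i j).map G.init).Nodup := segnd i j le_rfl (by omega) (Or.inl le_rfl)
      have hndaa : ((seg s j k₀).map G.init).Nodup :=
        segnd j k₀ (by omega) (by omega) (Or.inr (by omega))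
      have hndc2 : ((seg s k₀ m).map G.init).Nodup :=
        segnd k₀ m (by omega) le_rfl (Or.inr hik0)
      have last12 : (seg s i j ++ seg s j k₀).getLast? = some (s (k₀-1)) :=
        getLast?_append' (getLast?_seg s hjk0)
      have last123 : (seg s i j ++ seg s j k₀ ++ seg s k₀ m).getLast? = some (s (m-1)) :=
        getLast?_append' (getLast?_seg s hkm)
      have hjuncra : G.term (s (m-1)) = G.init (G.bar (s (k₀-1))) := by
        show G.term (s (m-1)) = G.term (s (k₀-1))
        exact hclc2.trans (hstep' k₀ h0k0).symm
      have pathp : G.IsEdgePath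
          (seg s i j ++ seg s j k₀ ++ seg s k₀ m ++ G.reversePath (seg s j k₀)) := by
        refine chain'_append' (chain'_append' (chain'_append'
          (segpath i j) (segpath j k₀) (getLast?_seg s hij) (head?_seg s hjk0)
            (hstep' j h0j))
          (segpath k₀ m) last12 (head?_seg s hkm) (hstep' k₀ h0k0))
          pathra last123 headra hjuncra
      have hlegjunc : ¬ rel (G.bar (s (m-1))) (G.bar (s (k₀-1))) := by
        intro hc
        exact hls k₀ h0k0 (htrans _ _ _ (hsymm _ _ hc) hC1)
      have legp : List.Chain' (fun e f => ¬ rel (G.bar e) f)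
          (seg s i j ++ seg s j k₀ ++ seg s k₀ m ++ G.reversePath (seg s j k₀)) := by
        refine chain'_append' (chain'_append' (chain'_append'
          (segleg i j) (segleg j k₀) (getLast?_seg s hij) (head?_seg s hjk0)
            (hls j h0j))
          (segleg k₀ m) last12 (head?_seg s hkm) (hls k₀ h0k0))
          legra last123 headra hlegjunc
      have headp : (seg s i j ++ seg s j k₀ ++ seg s k₀ m ++ G.reversePath (seg s j k₀)).head?
          = some (s i) :=
        head?_append' (head?_append' (head?_append' (head?_seg s hij)))
      have lastp : (seg s i j ++ seg s j k₀ ++ seg s k₀ m ++ G.reversePath (seg s j k₀)).getLast?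
          = some (G.bar (s j)) := getLast?_append' lastra
      have hnep : (seg s i j ++ seg s j k₀ ++ seg s k₀ m ++ G.reversePath (seg s j k₀)) ≠ [] :=
        append_ne_nil' (append_ne_nil' (append_ne_nil' (seg_ne_nil s hij)))
      have hloopp : G.IsLoop
          (seg s i j ++ seg s j k₀ ++ seg s k₀ m ++ G.reversePath (seg s j k₀)) := by
        refine ⟨G.init (s i), ⟨pathp, reduced_of_legal G rel hrefl legp⟩, hnep,
          ⟨s i, headp, rfl⟩, ⟨G.bar (s j), lastp, ?_⟩⟩
        rw [GraphData.term, G.bar_bar]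
        exact hvij.symm
      refine ⟨seg s i j ++ seg s j k₀ ++ seg s k₀ m ++ G.reversePath (seg s j k₀),
        ⟨hloopp, legp, ?_⟩, Or.inr (Or.inr ?_), ?_, ?_⟩
      · intro e f hel hef
        rw [lastp] at hel
        rw [headp] at hef
        obtain rfl : G.bar (s j) = e := by simpa using hel
        obtain rfl : s i = f := by simpa using hef
        rw [G.bar_bar]
        exact fun hc => hnij (hsymm _ _ hc)
      · -- dumbbell structure
        refine ⟨G.init (s i), G.init (s k₀), seg s i j, seg s j k₀, seg s k₀ m, rfl,
          hembed i j hij hclγ hndγ, hembed k₀ m (by omega) hclc2 hndc2,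
          hloopat i j hij hclγ, hloopat k₀ m (by omega) hclc2, ?_,
          seg_ne_nil s hjk0,
          ⟨segpath j k₀, reduced_of_legal G rel hrefl (segleg j k₀)⟩, hndaa,
          ⟨s j, head?_seg s hjk0, hvij.symm⟩,
          ⟨s (k₀-1), getLast?_seg s hjk0, hstep' k₀ h0k0⟩, ?_, ?_, ?_⟩
        · intro hc
          obtain ⟨-, h2⟩ := hInj i k₀ le_rfl hik0 hkm hc
          omega
        · intro w hw1' hw2'
          simp only [List.mem_map] at hw1' hw2'
          obtain ⟨x, hx, rfl⟩ := hw1'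
          obtain ⟨y, hy, hyx⟩ := hw2'
          obtain ⟨t, ht1, ht2, rfl⟩ := (mem_seg s).mp hx
          obtain ⟨r, hr1, hr2, rfl⟩ := (mem_seg s).mp hy
          obtain ⟨-, h2⟩ := hInj t r (by omega) (by omega) (by omega) hyx.symm
          omega
        · intro w hw1' hw2'
          simp only [List.mem_map] at hw1' hw2'
          obtain ⟨x, hx, rfl⟩ := hw1'
          obtain ⟨y, hy, hyx⟩ := hw2'
          obtain ⟨t, ht1, ht2, rfl⟩ := (mem_seg s).mp hx
          obtain ⟨r, hr1, hr2, hry⟩ := (mem_seg s).mp hy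
          subst hry
          obtain ⟨h1, h2⟩ := hInj r t (by omega) (by omega) (by omega) hyx
          subst h2
          rw [← hvij]
        · intro w hw1' hw2'
          simp only [List.mem_map] at hw1' hw2'
          obtain ⟨x, hx, rfl⟩ := hw1'
          obtain ⟨y, hy, hyx⟩ := hw2'
          obtain ⟨t, ht1, ht2, rfl⟩ := (mem_seg s).mp hx
          obtain ⟨r, hr1, hr2, hry⟩ := (mem_seg s).mp hy
          subst hry
          obtain ⟨h1, -⟩ := hInj t r (by omega) (by omega) (by omega) hyx.symm
          omega
      · -- each edge is crossed at most twice
        intro e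
        show (seg s i j ++ seg s j k₀ ++ seg s k₀ m ++ G.reversePath (seg s j k₀)).count e
          + (seg s i j ++ seg s j k₀ ++ seg s k₀ m ++ G.reversePath (seg s j k₀)).count (G.bar e) ≤ 2
        have E1 := harc i k₀ le_rfl (by omega) e
        rw [← seg_append s (show i ≤ j by omega) (show j ≤ k₀ by omega),
          List.count_append, List.count_append] at E1
        have E2 := harc j m (by omega) le_rfl e
        rw [← seg_append s (show j ≤ k₀ by omega) (show k₀ ≤ m by omega),
          List.count_append, List.count_append] at E2
        simp only [List.count_append, rev_count, G.bar_bar]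
        omega
      · -- the first edge of the first circle is crossed exactly once
        refine ⟨s i, ?_⟩
        show (seg s i j ++ seg s j k₀ ++ seg s k₀ m ++ G.reversePath (seg s j k₀)).count (s i)
          + (seg s i j ++ seg s j k₀ ++ seg s k₀ m ++ G.reversePath (seg s j k₀)).count (G.bar (s i)) = 1
        have P1 : 1 ≤ (seg s i k₀).count (s i) := count_seg_pos s le_rfl (by omega)
        rw [← seg_append s (show i ≤ j by omega) (show j ≤ k₀ by omega),
          List.count_append] at P1
        have E1 := harc i k₀ le_rfl (by omega) (s i)
        rw [← seg_append s (show i ≤ j by omega) (show j ≤ k₀ by omega),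
          List.count_append, List.count_append] at E1
        obtain ⟨Z1a, Z1b⟩ := hcount0 i k₀ m le_rfl (by omega) le_rfl
        obtain ⟨Z2a, Z2b⟩ := hcount0 i j k₀ le_rfl hij (by omega)
        simp only [List.count_append, rev_count, G.bar_bar]
        omega

    · -- the tail cycle is an embedded legal loop
      refine ⟨seg s k₀ m, embedded_package G rel hrefl (segpath k₀ m) (segleg k₀ m)
        (seg_ne_nil s hkm) (segnd k₀ m (by omega) le_rfl (Or.inr hik0)) ?_ ?_⟩
      · intro e f hel hef
        rw [getLast?_seg s hkm] at hel
        rw [head?_seg s hkm] at hef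
        obtain rfl : s (m-1) = e := by simpa using hel
        obtain rfl : s k₀ = f := by simpa using hef
        exact hclc2
      · intro e f hel hef
        rw [getLast?_seg s hkm] at hel
        rw [head?_seg s hkm] at hef
        obtain rfl : s (m-1) = e := by simpa using hel
        obtain rfl : s k₀ = f := by simpa using hef
        exact hC1
end
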